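/- arXiv:1305.3113 — 10 statements merged into one kernel-verified Lean document; each statement's English description precedes it below -/
import Mathlib

section
/- Let a, b, c ∈ ℂ and let t, z ∈ ℂ satisfy t ∉ (−∞,0], 1−t ∉ (−∞,0] and t−z ∉ (−∞,0]. Define f(z,t) = t^{b−c} (1−t)^{c−a−1} (t−z)^{−b} using principal branches. Then the hypergeometric operator applied in the variable z to f equals a t-derivative: z(1−z) ∂_z² f(z,t) + (c−(a+b+1)z) ∂_z f(z,t) − a·b·f(z,t) = −b ∂_t [ t^{b−c+1} (1−t)^{c−a} (t−z)^{−b−1} ]. -/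
open Complex

/-! Both sides are `t^(b-c) (1-t)^(c-a-1) (t-z)^(-b-2)` times a polynomial in `a, b, c, t, z`:
since the three bases are nonzero, a principal power `x^(μ+1)` splits as `x^μ * x`, and every
exponent occurring differs by an integer from the matching one in that common factor. What is left
is a polynomial identity. -/

namespace Complex

theorem cpow_eq_cpow_sub_one_mul {x : ℂ} (hx : x ≠ 0) (μ : ℂ) : x ^ μ = x ^ (μ - 1) * x := by
  conv_lhs => rw [← sub_add_cancel μ 1, cpow_add _ _ hx, cpow_one]

theorem hasDerivAt_const_sub_cpow {t w : ℂ} (μ : ℂ) (h : t - w ∈ slitPlane) :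
    HasDerivAt (fun w => (t - w) ^ μ) (-(μ * (t - w) ^ (μ - 1))) w := by
  simpa using ((hasDerivAt_id w).const_sub t).cpow_const (c := μ) h

theorem deriv_deriv_const_sub_cpow {t z : ℂ} (μ : ℂ) (h : t - z ∈ slitPlane) :
    deriv (deriv fun w => (t - w) ^ μ) z = μ * (μ - 1) * (t - z) ^ (μ - 1 - 1) := by
  have hopen : IsOpen {w : ℂ | t - w ∈ slitPlane} :=
    isOpen_slitPlane.preimage (continuous_const.sub continuous_id)
  have hderiv : deriv (fun w => (t - w) ^ μ) =ᶠ[nhds z] fun w => -μ * (t - w) ^ (μ - 1) := by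
    filter_upwards [hopen.mem_nhds h] with w hw
    rw [(hasDerivAt_const_sub_cpow μ hw).deriv, neg_mul]
  rw [hderiv.deriv_eq, deriv_const_mul_field, (hasDerivAt_const_sub_cpow _ h).deriv]
  ring

theorem hasDerivAt_cpow_mul_one_sub_cpow_mul_sub_cpow {s z : ℂ} (α β γ : ℂ)
    (hs : s ∈ slitPlane) (hs1 : 1 - s ∈ slitPlane) (hsz : s - z ∈ slitPlane) :
    HasDerivAt (fun s => s ^ α * (1 - s) ^ β * (s - z) ^ γ)
      (s ^ (α - 1) * (1 - s) ^ (β - 1) * (s - z) ^ (γ - 1) *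
        (α * (1 - s) * (s - z) - β * s * (s - z) + γ * s * (1 - s))) s := by
  have h1 : HasDerivAt (fun s => s ^ α) (α * s ^ (α - 1)) s := by
    simpa using (hasDerivAt_id s).cpow_const (c := α) hs
  have h2 : HasDerivAt (fun s => (1 - s) ^ β) (-(β * (1 - s) ^ (β - 1))) s :=
    hasDerivAt_const_sub_cpow β hs1
  have h3 : HasDerivAt (fun s => (s - z) ^ γ) (γ * (s - z) ^ (γ - 1)) s := by
    simpa using ((hasDerivAt_id s).sub_const z).cpow_const (c := γ) hsz
  refine ((h1.mul h2).mul h3).congr_deriv ?_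
  rw [Pi.mul_apply, cpow_eq_cpow_sub_one_mul (slitPlane_ne_zero hs) α,
    cpow_eq_cpow_sub_one_mul (slitPlane_ne_zero hs1) β,
    cpow_eq_cpow_sub_one_mul (slitPlane_ne_zero hsz) γ]
  ring

end Complex

/-- the hypergeometric operator applied in `z` to
`f(z,t) = t^(b-c) (1-t)^(c-a-1) (t-z)^(-b)` equals
`-b ∂_t [ t^(b-c+1) (1-t)^(c-a) (t-z)^(-b-1) ]`. -/
theorem hypergeometric_integrand_identity (a b c : ℂ) (t z : ℂ)
    (ht : t ∈ Complex.slitPlane) (ht1 : (1 - t) ∈ Complex.slitPlane)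
    (htz : (t - z) ∈ Complex.slitPlane) :
    z * (1 - z) *
        deriv (deriv (fun w : ℂ =>
          t ^ (b - c) * (1 - t) ^ (c - a - 1) * (t - w) ^ (-b))) z
      + (c - (a + b + 1) * z) *
        deriv (fun w : ℂ =>
          t ^ (b - c) * (1 - t) ^ (c - a - 1) * (t - w) ^ (-b)) z
      - a * b * (t ^ (b - c) * (1 - t) ^ (c - a - 1) * (t - z) ^ (-b))
    = -b * deriv (fun s : ℂ =>
        s ^ (b - c + 1) * (1 - s) ^ (c - a) * (s - z) ^ (-b - 1)) t := by
  simp only [deriv_const_mul_field']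
  rw [deriv_deriv_const_sub_cpow _ htz,
    (hasDerivAt_const_sub_cpow _ htz).deriv,
    (hasDerivAt_cpow_mul_one_sub_cpow_mul_sub_cpow _ _ _ ht ht1 htz).deriv, add_sub_cancel_right,
    cpow_eq_cpow_sub_one_mul (slitPlane_ne_zero htz) (-b),
    cpow_eq_cpow_sub_one_mul (slitPlane_ne_zero htz) (-b - 1)]
  ring
end

section
/- Let a, c ∈ ℂ and let t, z ∈ ℂ satisfy t ≠ 0, t ∉ (−∞,0] and 1−t ∉ (−∞,0]. Define f(z,t) = e^{z/t} t^{−c} (1−t)^{c−a−1} using principal branches. Then z ∂_z² f(z,t) + (c−z) ∂_z f(z,t) − a f(z,t) = −∂_t [ e^{z/t} t^{−c} (1−t)^{c−a} ]. -/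
open Complex

/-- the confluent operator applied in `z` to
`f(z,t) = e^(z/t) t^(-c) (1-t)^(c-a-1)` equals
`-∂_t [ e^(z/t) t^(-c) (1-t)^(c-a) ]`. -/
theorem confluent_integrand_identity' (a c : ℂ) (t z : ℂ)
    (ht0 : t ≠ 0) (ht : t ∈ Complex.slitPlane)
    (ht1 : (1 - t) ∈ Complex.slitPlane) :
    z * deriv (deriv (fun w : ℂ =>
          Complex.exp (w / t) * t ^ (-c) * (1 - t) ^ (c - a - 1))) z
      + (c - z) * deriv (fun w : ℂ =>
          Complex.exp (w / t) * t ^ (-c) * (1 - t) ^ (c - a - 1)) z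
      - a * (Complex.exp (z / t) * t ^ (-c) * (1 - t) ^ (c - a - 1))
    = -deriv (fun s : ℂ =>
        Complex.exp (z / s) * s ^ (-c) * (1 - s) ^ (c - a)) t := by
  have h1t : (1 : ℂ) - t ≠ 0 := Complex.slitPlane_ne_zero ht1
  -- derivative of exp(w/t) in w
  have hexp : ∀ w : ℂ, HasDerivAt (fun w : ℂ => Complex.exp (w / t))
      (Complex.exp (w / t) * (1 / t)) w := fun w =>
    (((hasDerivAt_id w).div_const t).cexp)
  -- first derivative in z
  have hd1 : deriv (fun w : ℂ =>
      Complex.exp (w / t) * t ^ (-c) * (1 - t) ^ (c - a - 1))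
      = fun w : ℂ => Complex.exp (w / t) * (1 / t) * t ^ (-c) * (1 - t) ^ (c - a - 1) := by
    funext w
    exact (((hexp w).mul_const (t ^ (-c))).mul_const ((1 - t) ^ (c - a - 1))).deriv
  have hd2 : deriv (deriv (fun w : ℂ =>
      Complex.exp (w / t) * t ^ (-c) * (1 - t) ^ (c - a - 1))) z
      = Complex.exp (z / t) * (1 / t) * (1 / t) * t ^ (-c) * (1 - t) ^ (c - a - 1) := by
    rw [hd1]
    exact ((((hexp z).mul_const (1 / t)).mul_const (t ^ (-c))).mul_const
      ((1 - t) ^ (c - a - 1))).deriv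
  -- derivative in t
  have hA : HasDerivAt (fun s : ℂ => Complex.exp (z / s))
      (Complex.exp (z / t) * (z * -(t ^ 2)⁻¹)) t := by
    have h0 : HasDerivAt (fun s : ℂ => z / s) (z * -(t ^ 2)⁻¹) t := by
      simpa [div_eq_mul_inv] using (hasDerivAt_inv ht0).const_mul z
    exact h0.cexp
  have hB : HasDerivAt (fun s : ℂ => s ^ (-c)) (-c * t ^ (-c - 1) * 1) t :=
    (hasDerivAt_id t).cpow_const ht
  have hC : HasDerivAt (fun s : ℂ => (1 - s) ^ (c - a))
      ((c - a) * (1 - t) ^ (c - a - 1) * (0 - 1)) t := by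
    exact ((hasDerivAt_const t (1 : ℂ)).sub (hasDerivAt_id t)).cpow_const ht1
  have hdt : deriv (fun s : ℂ =>
      Complex.exp (z / s) * s ^ (-c) * (1 - s) ^ (c - a)) t
      = (Complex.exp (z / t) * (z * -(t ^ 2)⁻¹) * t ^ (-c)
          + Complex.exp (z / t) * (-c * t ^ (-c - 1) * 1)) * (1 - t) ^ (c - a)
        + Complex.exp (z / t) * t ^ (-c) * ((c - a) * (1 - t) ^ (c - a - 1) * (0 - 1)) :=
    ((hA.mul hB).mul hC).deriv
  -- cpow rewrites
  have hT : t ^ (-c - 1) = t ^ (-c) * t⁻¹ := by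
    rw [show -c - 1 = -c + (-1) by ring, Complex.cpow_add _ _ ht0, Complex.cpow_neg_one]
  have hU : (1 - t) ^ (c - a) = (1 - t) ^ (c - a - 1) * (1 - t) := by
    have h := Complex.cpow_add (c - a - 1) 1 h1t
    rw [Complex.cpow_one] at h
    rw [show c - a - 1 + 1 = c - a by ring] at h
    exact h
  rw [hd2, hd1, hdt, hT, hU]
  simp only []
  field_simp
  ring
end

section
/- Let c ∈ ℂ and let t, z ∈ ℂ with t ∉ (−∞,0]. Define f(z,t) = e^{t} e^{z/t} t^{−c} using the principal branch of t^{−c}. Then z ∂_z² f(z,t) + c ∂_z f(z,t) − f(z,t) = −∂_t [ e^{t} e^{z/t} t^{−c} ]. -/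
/-! In `z` the integrand `f` is an exponential with rate `1/t`, so `∂_z f = f/t` and the
`₀F₁` operator multiplies `f` by `z/t² + c/t - 1`; the logarithmic derivative of `f` in `t` is
`1 - z/t² - c/t`, the negative of that factor. -/

open Complex

theorem hasDerivAt_mul_exp_div_mul (a b t w : ℂ) :
    HasDerivAt (fun w : ℂ => a * exp (w / t) * b) (a * exp (w / t) * b / t) w := by
  have h := ((((hasDerivAt_id w).div_const t).cexp).const_mul a).mul_const b
  exact h.congr_deriv (by simp only [id]; ring)

theorem deriv_mul_exp_div_mul (a b t : ℂ) :
    deriv (fun w : ℂ => a * exp (w / t) * b) = fun w => a * exp (w / t) * b / t :=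
  funext fun w => (hasDerivAt_mul_exp_div_mul a b t w).deriv

theorem hasDerivAt_exp_mul_exp_div_mul_cpow (c z : ℂ) {t : ℂ} (ht : t ∈ slitPlane) :
    HasDerivAt (fun s : ℂ => exp s * exp (z / s) * s ^ (-c))
      (exp t * exp (z / t) * t ^ (-c) * (1 - z / t ^ 2 - c / t)) t := by
  have ht0 : t ≠ 0 := slitPlane_ne_zero ht
  have hinv : HasDerivAt (fun s : ℂ => z / s) (-(z / t ^ 2)) t := by
    simpa only [div_eq_mul_inv, mul_neg] using (hasDerivAt_inv ht0).const_mul z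
  have hpow : HasDerivAt (fun s : ℂ => s ^ (-c)) (-c * t ^ (-c - 1)) t :=
    (hasStrictDerivAt_cpow_const ht).hasDerivAt
  have h := ((hasDerivAt_exp t).mul hinv.cexp).mul hpow
  refine h.congr_deriv ?_
  rw [cpow_sub _ _ ht0, cpow_one, Pi.mul_apply]
  ring

/-- the ₀F₁ operator applied in `z` to
`f(z,t) = e^t e^(z/t) t^(-c)` equals `-∂_t [ e^t e^(z/t) t^(-c) ]`. -/
theorem zeroFone_integrand_identity (c : ℂ) (t z : ℂ)
    (ht : t ∈ Complex.slitPlane) :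
    z * deriv (deriv (fun w : ℂ =>
          Complex.exp t * Complex.exp (w / t) * t ^ (-c))) z
      + c * deriv (fun w : ℂ =>
          Complex.exp t * Complex.exp (w / t) * t ^ (-c)) z
      - Complex.exp t * Complex.exp (z / t) * t ^ (-c)
    = -deriv (fun s : ℂ =>
        Complex.exp s * Complex.exp (z / s) * s ^ (-c)) t := by
  rw [(hasDerivAt_exp_mul_exp_div_mul_cpow c z ht).deriv, deriv_mul_exp_div_mul,
    (((hasDerivAt_mul_exp_div_mul _ _ t z).div_const t)).deriv]
  ring
end

section
/- Let a, b, c ∈ ℂ with Re a > 0 and Re(c−a) > 0, and let z ∈ ℂ with |z| < 1. Then the integral ∫₁^∞ t^{b−c} (t−1)^{c−a−1} (t−z)^{−b} dt (integrand defined via principal branches, which apply since Re(t−z) > 0 and t, t−1 > 0 for t > 1) converges and equals ∑_{n=0}^∞ Γ(a+n) Γ(c−a) (b)_n z^n / (Γ(c+n) n!); in particular, when c ∉ {0,−1,−2,…} it equals (Γ(a)Γ(c−a)/Γ(c)) · F(a,b;c;z). -/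
/-!
For `t > 1` and `‖z‖ < 1` the binomial series `(t - z)^(-b) = ∑ (b)ₙ zⁿ / n! · t^(-(b+n))` turns the
integrand into `∑ (b)ₙ zⁿ / n! · t^(-(c+n)) (t - 1)^(c-a-1)`. The substitution `t = 1/x` makes each
term a Beta integral, equal to `Γ(a+n) Γ(c-a) / Γ(c+n)`. Since `|t^(-(c+n))| ≤ |t^(-c)|` on `t ≥ 1`,
every term is dominated by the `n = 0` kernel times an absolutely summable coefficient, which both
proves integrability and justifies integrating termwise. The form with `F(a,b;c;z)` then follows
from `Γ(x + n) = (x)ₙ Γ(x)`.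
-/

open Complex MeasureTheory Set

theorem Ring.choose_add_sub_one_eq_ascPochhammer_div_factorial {K : Type*} [Field K] [CharZero K]
    (b : K) (n : ℕ) :
    Ring.choose (b + n - 1) n = (ascPochhammer K n).eval b / n.factorial := by
  rw [← Ring.multichoose_eq, eq_div_iff (by exact_mod_cast n.factorial_ne_zero), mul_comm,
    ← nsmul_eq_mul, Ring.factorial_nsmul_multichoose_eq_ascPochhammer,
    Polynomial.ascPochhammer_smeval_eq_eval]

theorem hasSum_ascPochhammer_mul_pow_div_factorial (b w : ℂ) (hw : ‖w‖ < 1) :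
    HasSum (fun n : ℕ => (ascPochhammer ℂ n).eval b * w ^ n / n.factorial) ((1 - w) ^ (-b)) := by
  have hw' : w ∈ Metric.eball (0 : ℂ) 1 := by simpa [← ofReal_norm] using hw
  have := (one_div_one_sub_cpow_hasFPowerSeriesOnBall_zero b).hasSum hw'
  simpa only [FormalMultilinearSeries.ofScalars_apply_eq, zero_add, smul_eq_mul,
    Ring.choose_add_sub_one_eq_ascPochhammer_div_factorial, div_mul_eq_mul_div, cpow_neg,
    one_div] using this

theorem summable_norm_ascPochhammer_mul_pow_div_factorial (b w : ℂ) (hw : ‖w‖ < 1) :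
    Summable (fun n : ℕ => ‖(ascPochhammer ℂ n).eval b * w ^ n / n.factorial‖) := by
  have hw' : w ∈ Metric.eball (0 : ℂ) 1 := by simpa [← ofReal_norm] using hw
  have := (FormalMultilinearSeries.summable_norm_apply _
    ((one_div_one_sub_cpow_hasFPowerSeriesOnBall_zero b).r_le.trans_lt' hw'))
  simpa only [FormalMultilinearSeries.ofScalars_apply_eq, smul_eq_mul,
    Ring.choose_add_sub_one_eq_ascPochhammer_div_factorial, div_mul_eq_mul_div] using this

theorem Complex.ofReal_mul_cpow {x : ℝ} (hx : 0 < x) (y s : ℂ) :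
    ((x : ℂ) * y) ^ s = (x : ℂ) ^ s * y ^ s := by
  rcases eq_or_ne y 0 with rfl | hy
  · rcases eq_or_ne s 0 with rfl | hs
    · simp
    · simp [zero_cpow hs]
  have hx0 : (x : ℂ) ≠ 0 := by exact_mod_cast hx.ne'
  rw [cpow_def_of_ne_zero (mul_ne_zero hx0 hy), cpow_def_of_ne_zero hx0, cpow_def_of_ne_zero hy,
    log_ofReal_mul hx hy, add_mul, exp_add, ofReal_log hx.le]

theorem hasSum_sub_cpow_neg (b z : ℂ) {t : ℝ} (hzt : ‖z‖ < t) :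
    HasSum (fun n : ℕ => (ascPochhammer ℂ n).eval b * z ^ n / n.factorial * (t : ℂ) ^ (-(b + n)))
      (((t : ℂ) - z) ^ (-b)) := by
  have ht : 0 < t := (norm_nonneg z).trans_lt hzt
  have htC : (t : ℂ) ≠ 0 := by exact_mod_cast ht.ne'
  have hw : ‖z / t‖ < 1 := by
    rwa [norm_div, norm_real, Real.norm_of_nonneg ht.le, div_lt_one ht]
  have hfactor : (t : ℂ) - z = t * (1 - z / t) := by field_simp
  rw [hfactor, ofReal_mul_cpow ht]
  refine ((hasSum_ascPochhammer_mul_pow_div_factorial b (z / t) hw).mul_left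
    ((t : ℂ) ^ (-b))).congr_fun fun n => ?_
  rw [neg_add, cpow_add _ _ htC, cpow_neg _ (n : ℂ), cpow_natCast, div_pow]
  ring

theorem abs_deriv_inv_smul_cpow_mul_sub_one_cpow (u v : ℂ) {x : ℝ} (hx : x ∈ Ioo 0 1) :
    |-(x ^ 2)⁻¹| • ((x⁻¹ : ℝ) ^ (-(u + v)) * (((x⁻¹ : ℝ) : ℂ) - 1) ^ (v - 1) : ℂ)
      = (x : ℂ) ^ (u - 1) * (1 - (x : ℂ)) ^ (v - 1) := by
  obtain ⟨hx0, hx1⟩ := hx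
  have hxC : (x : ℂ) ≠ 0 := by exact_mod_cast hx0.ne'
  have harg : (x : ℂ).arg ≠ Real.pi := by
    rw [arg_ofReal_of_nonneg hx0.le]
    exact Real.pi_ne_zero.symm
  have hsub : ((x⁻¹ : ℝ) : ℂ) - 1 = ((1 - x : ℝ) : ℂ) * ((x : ℂ)⁻¹ : ℂ) := by
    push_cast
    field_simp
  have hpow : ((x : ℂ) ^ (2 : ℂ))⁻¹ * ((x : ℂ) ^ (u + v) * ((x : ℂ) ^ (v - 1))⁻¹)
      = (x : ℂ) ^ (u - 1) := by
    rw [← cpow_neg, ← cpow_neg, ← cpow_add _ _ hxC, ← cpow_add _ _ hxC]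
    ring_nf
  rw [abs_neg, abs_inv, abs_of_pos (by positivity), hsub, ← ofReal_inv x,
    mul_cpow_ofReal_nonneg (by linarith) (by positivity), ofReal_inv, inv_cpow _ _ harg,
    inv_cpow _ _ harg, ← cpow_neg, neg_neg, real_smul, ofReal_inv, ofReal_pow,
    ← cpow_ofNat, ← hpow, ofReal_sub, ofReal_one]
  ring

theorem integrableOn_Ioi_cpow_mul_sub_one_cpow_and_integral_eq {s v : ℂ} (hv : 0 < v.re)
    (hvs : v.re < s.re) :
    IntegrableOn (fun t : ℝ => (t : ℂ) ^ (-s) * ((t : ℂ) - 1) ^ (v - 1)) (Ioi 1) ∧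
      ∫ t in Ioi (1 : ℝ), (t : ℂ) ^ (-s) * ((t : ℂ) - 1) ^ (v - 1)
        = Gamma (s - v) * Gamma v / Gamma s := by
  obtain ⟨u, rfl⟩ : ∃ u, s = u + v := ⟨s - v, (sub_add_cancel s v).symm⟩
  have hu : 0 < u.re := by rw [add_re] at hvs; linarith
  rw [add_sub_cancel_right]
  have himg : (fun x : ℝ => x⁻¹) '' Ioo 0 1 = Ioi 1 := by
    rw [Set.image_inv_eq_inv, Set.inv_Ioo_0_left one_pos, inv_one]
  have hderiv : ∀ x ∈ Ioo (0 : ℝ) 1,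
      HasDerivWithinAt (fun x : ℝ => x⁻¹) (-(x ^ 2)⁻¹) (Ioo 0 1) x :=
    fun x hx => (hasDerivAt_inv hx.1.ne').hasDerivWithinAt
  have hinj : InjOn (fun x : ℝ => x⁻¹) (Ioo 0 1) := inv_injective.injOn
  have hbeta : IntegrableOn (fun x : ℝ => (x : ℂ) ^ (u - 1) * (1 - (x : ℂ)) ^ (v - 1)) (Ioo 0 1) :=
    ((intervalIntegrable_iff_integrableOn_Ioc_of_le zero_le_one).mp
      (betaIntegral_convergent hu hv)).mono_set Ioo_subset_Ioc_self
  constructor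
  · rw [← himg, integrableOn_image_iff_integrableOn_abs_deriv_smul measurableSet_Ioo hderiv hinj]
    exact hbeta.congr_fun (fun x hx => (abs_deriv_inv_smul_cpow_mul_sub_one_cpow u v hx).symm)
      measurableSet_Ioo
  · rw [← himg, integral_image_eq_integral_abs_deriv_smul measurableSet_Ioo hderiv hinj,
      setIntegral_congr_fun measurableSet_Ioo
        (fun x hx => abs_deriv_inv_smul_cpow_mul_sub_one_cpow u v hx),
      integral_Ioc_eq_integral_Ioo.symm, ← intervalIntegral.integral_of_le zero_le_one,
      ← betaIntegral, eq_div_iff (Gamma_ne_zero_of_re_pos (by rw [add_re]; linarith)),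
      Gamma_mul_Gamma_eq_betaIntegral hu hv, mul_comm]

theorem Complex.norm_ofReal_cpow_le_of_re_le {t : ℝ} (ht : 1 ≤ t) {s s' : ℂ} (hss' : s.re ≤ s'.re) :
    ‖(t : ℂ) ^ s‖ ≤ ‖(t : ℂ) ^ s'‖ := by
  have ht0 : 0 < t := one_pos.trans_le ht
  rw [norm_cpow_eq_rpow_re_of_pos ht0, norm_cpow_eq_rpow_re_of_pos ht0]
  exact Real.rpow_le_rpow_of_exponent_le ht hss'

theorem Complex.Gamma_add_nat_div_Gamma_add_nat {a c : ℂ} (ha : ∀ k : ℕ, a ≠ -k)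
    (hc : ∀ k : ℕ, c ≠ -k) (n : ℕ) :
    Gamma (a + n) / Gamma (c + n)
      = Gamma a / Gamma c * ((ascPochhammer ℂ n).eval a / (ascPochhammer ℂ n).eval c) := by
  have hGa := Gamma_ne_zero ha
  have hGc := Gamma_ne_zero hc
  rw [← Gamma_add_nat_div_Gamma_eq a ha, ← Gamma_add_nat_div_Gamma_eq c hc]
  field_simp

section EulerIntegrand

variable (a b c z : ℂ)

theorem hasSum_euler_integrand {t : ℝ} (hz : ‖z‖ < 1) (ht : 1 < t) :
    HasSum (fun n : ℕ => (ascPochhammer ℂ n).eval b * z ^ n / n.factorial *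
        ((t : ℂ) ^ (-(c + n)) * ((t : ℂ) - 1) ^ (c - a - 1)))
      ((t : ℂ) ^ (b - c) * ((t : ℂ) - 1) ^ (c - a - 1) * ((t : ℂ) - z) ^ (-b)) := by
  have htC : (t : ℂ) ≠ 0 := by exact_mod_cast (one_pos.trans ht).ne'
  refine ((hasSum_sub_cpow_neg b z (hz.trans ht)).mul_left
    ((t : ℂ) ^ (b - c) * ((t : ℂ) - 1) ^ (c - a - 1))).congr_fun fun n => ?_
  rw [show -(c + n) = (b - c) + -(b + n) by ring, cpow_add _ _ htC]
  ring

theorem norm_euler_term_le (n : ℕ) {t : ℝ} (ht : 1 ≤ t) :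
    ‖(ascPochhammer ℂ n).eval b * z ^ n / n.factorial *
        ((t : ℂ) ^ (-(c + n)) * ((t : ℂ) - 1) ^ (c - a - 1))‖
      ≤ ‖(ascPochhammer ℂ n).eval b * z ^ n / n.factorial‖ *
        ‖(t : ℂ) ^ (-c) * ((t : ℂ) - 1) ^ (c - a - 1)‖ := by
  rw [norm_mul, norm_mul, norm_mul]
  gcongr
  exact norm_ofReal_cpow_le_of_re_le ht (by simp)

theorem integrableOn_euler_integrand (ha : 0 < a.re) (hca : 0 < (c - a).re) (hz : ‖z‖ < 1) :
    IntegrableOn (fun t : ℝ =>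
        (t : ℂ) ^ (b - c) * ((t : ℂ) - 1) ^ (c - a - 1) * ((t : ℂ) - z) ^ (-b)) (Ioi 1) := by
  have hkernel := (integrableOn_Ioi_cpow_mul_sub_one_cpow_and_integral_eq (s := c) hca
    (by rw [sub_re]; linarith)).1
  refine Integrable.mono'
    (hkernel.norm.const_mul (∑' n : ℕ, ‖(ascPochhammer ℂ n).eval b * z ^ n / n.factorial‖))
    (by fun_prop) ((ae_restrict_iff' measurableSet_Ioi).mpr (.of_forall fun t ht => ?_))
  exact (hasSum_euler_integrand a b c z hz ht).norm_le_of_bounded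
    ((summable_norm_ascPochhammer_mul_pow_div_factorial b z hz).hasSum.mul_right _)
    (fun n => norm_euler_term_le a b c z n (le_of_lt ht))

theorem hasSum_integral_euler_integrand (ha : 0 < a.re) (hca : 0 < (c - a).re) (hz : ‖z‖ < 1) :
    HasSum (fun n : ℕ => Gamma (a + n) * Gamma (c - a) * (ascPochhammer ℂ n).eval b * z ^ n /
        (Gamma (c + n) * (n.factorial : ℂ)))
      (∫ t in Ioi (1 : ℝ),
        (t : ℂ) ^ (b - c) * ((t : ℂ) - 1) ^ (c - a - 1) * ((t : ℂ) - z) ^ (-b)) := by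
  have hbeta (n : ℕ) := integrableOn_Ioi_cpow_mul_sub_one_cpow_and_integral_eq (s := c + n) hca
    (by rw [sub_re, add_re, natCast_re]; linarith [n.cast_nonneg (α := ℝ)])
  have hkernel := (integrableOn_Ioi_cpow_mul_sub_one_cpow_and_integral_eq (s := c) hca
    (by rw [sub_re]; linarith)).1
  have hterm_int (n : ℕ) :=
    (hbeta n).1.const_mul ((ascPochhammer ℂ n).eval b * z ^ n / n.factorial)
  have hnorm_summable : Summable fun n : ℕ => ∫ t in Ioi (1 : ℝ),
      ‖(ascPochhammer ℂ n).eval b * z ^ n / n.factorial *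
        ((t : ℂ) ^ (-(c + n)) * ((t : ℂ) - 1) ^ (c - a - 1))‖ := by
    refine .of_nonneg_of_le (fun n => integral_nonneg fun t => norm_nonneg _) (fun n => ?_)
      ((summable_norm_ascPochhammer_mul_pow_div_factorial b z hz).mul_right
        (∫ t in Ioi (1 : ℝ), ‖(t : ℂ) ^ (-c) * ((t : ℂ) - 1) ^ (c - a - 1)‖))
    rw [← integral_const_mul]
    exact setIntegral_mono_on (hterm_int n).norm (hkernel.norm.const_mul _) measurableSet_Ioi
      fun t ht => norm_euler_term_le a b c z n (le_of_lt ht)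
  rw [setIntegral_congr_fun measurableSet_Ioi
    fun t ht => (hasSum_euler_integrand a b c z hz ht).tsum_eq.symm]
  refine (hasSum_integral_of_summable_integral_norm hterm_int hnorm_summable).congr_fun
    fun n => ?_
  rw [integral_const_mul, (hbeta n).2, show c + n - (c - a) = a + n by ring]
  ring

end EulerIntegrand

/-- the Euler-type integral representation of the
hypergeometric function: for `Re a > 0`, `Re (c-a) > 0`, `|z| < 1`, the
integral `∫₁^∞ t^(b-c) (t-1)^(c-a-1) (t-z)^(-b) dt` converges and equals
`∑ Γ(a+n) Γ(c-a) (b)ₙ zⁿ / (Γ(c+n) n!)`; when `c` is not a nonpositive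
integer it equals `(Γ(a)Γ(c-a)/Γ(c)) F(a,b;c;z)`. -/
theorem hypergeometric_integral_representation (a b c z : ℂ)
    (ha : 0 < a.re) (hca : 0 < (c - a).re) (hz : ‖z‖ < 1) :
    IntegrableOn (fun t : ℝ =>
        (t : ℂ) ^ (b - c) * ((t : ℂ) - 1) ^ (c - a - 1) * ((t : ℂ) - z) ^ (-b))
      (Set.Ioi 1) ∧
    (∫ t in Set.Ioi (1 : ℝ),
        (t : ℂ) ^ (b - c) * ((t : ℂ) - 1) ^ (c - a - 1) * ((t : ℂ) - z) ^ (-b))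
      = ∑' n : ℕ, Complex.Gamma (a + n) * Complex.Gamma (c - a) *
          (ascPochhammer ℂ n).eval b * z ^ n /
          (Complex.Gamma (c + n) * (n.factorial : ℂ)) ∧
    ((∀ n : ℕ, c ≠ -(n : ℂ)) →
      (∫ t in Set.Ioi (1 : ℝ),
          (t : ℂ) ^ (b - c) * ((t : ℂ) - 1) ^ (c - a - 1) * ((t : ℂ) - z) ^ (-b))
        = Complex.Gamma a * Complex.Gamma (c - a) / Complex.Gamma c *
            ∑' n : ℕ, (ascPochhammer ℂ n).eval a * (ascPochhammer ℂ n).eval b *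
              z ^ n / ((ascPochhammer ℂ n).eval c * (n.factorial : ℂ))) := by
  have hsum := hasSum_integral_euler_integrand a b c z ha hca hz
  refine ⟨integrableOn_euler_integrand a b c z ha hca hz, hsum.tsum_eq.symm, fun hc => ?_⟩
  have ha' (k : ℕ) : a ≠ -k := fun h => by
    rw [h, neg_re, natCast_re] at ha
    linarith [k.cast_nonneg (α := ℝ)]
  rw [← hsum.tsum_eq, ← tsum_mul_left]
  refine tsum_congr fun n => ?_
  rw [show Gamma (a + n) * Gamma (c - a) * (ascPochhammer ℂ n).eval b * z ^ n /
      (Gamma (c + n) * n.factorial) = Gamma (a + n) / Gamma (c + n) *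
        (Gamma (c - a) * (ascPochhammer ℂ n).eval b * z ^ n / n.factorial) by ring,
    Gamma_add_nat_div_Gamma_add_nat ha' hc n]
  ring
end

section
/- Let a, c ∈ ℂ with Re a > 0 and Re(c−a) > 0, and let z ∈ ℂ. Then the integral ∫₁^∞ e^{z/t} t^{−c} (t−1)^{c−a−1} dt (integrand defined via principal branches for t > 1) converges and equals ∑_{n=0}^∞ Γ(a+n) Γ(c−a) z^n / (Γ(c+n) n!); in particular, when c ∉ {0,−1,−2,…} it equals (Γ(a)Γ(c−a)/Γ(c)) · F(a;c;z). -/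
/-!
Substituting `t = u⁻¹` turns the integral into the Euler-type integral
`∫₀¹ e^{zu} u^{a-1} (1-u)^{c-a-1} du`. On `(0, 1)` the power series of `e^{zu}` is dominated
termwise by `‖z‖ⁿ/n!` times the integrable beta kernel, so it can be integrated term by term, and
the `n`-th moment of the beta kernel is `B(a+n, c-a) = Γ(a+n) Γ(c-a) / Γ(c+n)`.
Finally `Γ(s+n) = (s)ₙ Γ(s)` turns the series into `Γ(a)Γ(c-a)/Γ(c) · F(a;c;z)`.
-/

open Complex MeasureTheory Set
open scoped Nat

section ExpMoments

variable {μ : Measure ℝ} {G : ℝ → ℂ}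

theorem integrable_cexp_mul_of_abs_le_one (hG : Integrable G μ) (hμ : ∀ᵐ u ∂μ, |u| ≤ 1)
    (z : ℂ) : Integrable (fun u : ℝ => cexp (z * u) * G u) μ := by
  refine hG.bdd_mul (c := Real.exp ‖z‖) (by fun_prop) ?_
  filter_upwards [hμ] with u hu
  rw [norm_exp]
  refine Real.exp_le_exp.2 ((re_le_norm _).trans ?_)
  rw [norm_mul, norm_real, Real.norm_eq_abs]
  exact mul_le_of_le_one_right (norm_nonneg z) hu

theorem integrable_ofReal_pow_mul_of_abs_le_one (hG : Integrable G μ)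
    (hμ : ∀ᵐ u ∂μ, |u| ≤ 1) (n : ℕ) : Integrable (fun u : ℝ => (u : ℂ) ^ n * G u) μ := by
  refine hG.bdd_mul (c := 1) (by fun_prop) ?_
  filter_upwards [hμ] with u hu
  rw [norm_pow, norm_real, Real.norm_eq_abs]
  exact pow_le_one₀ (abs_nonneg u) hu

theorem hasSum_integral_cexp_mul (hG : Integrable G μ) (hμ : ∀ᵐ u ∂μ, |u| ≤ 1) (z : ℂ) :
    HasSum (fun n : ℕ => z ^ n / n ! * ∫ u, (u : ℂ) ^ n * G u ∂μ)
      (∫ u, cexp (z * u) * G u ∂μ) := by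
  set F : ℕ → ℝ → ℂ := fun n u => z ^ n / n ! * ((u : ℂ) ^ n * G u)
  have hF_int (n : ℕ) : Integrable (F n) μ :=
    (integrable_ofReal_pow_mul_of_abs_le_one hG hμ n).const_mul _
  have hF_norm (n : ℕ) : ∫ u, ‖F n u‖ ∂μ ≤ ‖z‖ ^ n / n ! * ∫ u, ‖G u‖ ∂μ := by
    rw [← integral_const_mul]
    refine integral_mono_ae (hF_int n).norm (hG.norm.const_mul _) ?_
    filter_upwards [hμ] with u hu
    simp only [F, norm_mul, norm_div, norm_pow, Complex.norm_natCast, norm_real,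
      Real.norm_eq_abs]
    gcongr
    exact mul_le_of_le_one_left (norm_nonneg _) (pow_le_one₀ (abs_nonneg u) hu)
  have hF_sum : Summable fun n => ∫ u, ‖F n u‖ ∂μ :=
    ((Real.summable_pow_div_factorial ‖z‖).mul_right _).of_nonneg_of_le
      (fun n => integral_nonneg fun u => norm_nonneg _) hF_norm
  have hF_tsum (u : ℝ) : ∑' n, F n u = cexp (z * u) * G u := by
    rw [exp_eq_exp_ℂ, ← (NormedSpace.expSeries_div_hasSum_exp ((z * u))).tsum_eq,
      ← tsum_mul_right]
    exact tsum_congr fun n => by simp only [F]; ring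
  simpa only [F, integral_const_mul, hF_tsum] using
    hasSum_integral_of_summable_integral_norm hF_int hF_sum

end ExpMoments

section Beta

variable {a b : ℂ}

theorem integrableOn_Ioo_cpow_mul_one_sub_cpow (ha : 0 < a.re) (hb : 0 < b.re) :
    IntegrableOn (fun u : ℝ => (u : ℂ) ^ (a - 1) * (1 - (u : ℂ)) ^ (b - 1)) (Ioo 0 1) :=
  (intervalIntegrable_iff_integrableOn_Ioo_of_le zero_le_one).1 (betaIntegral_convergent ha hb)

theorem setIntegral_Ioo_cpow_mul_one_sub_cpow (ha : 0 < a.re) (hb : 0 < b.re) :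
    ∫ u in Ioo (0 : ℝ) 1, (u : ℂ) ^ (a - 1) * (1 - (u : ℂ)) ^ (b - 1)
      = Gamma a * Gamma b / Gamma (a + b) := by
  rw [eq_div_iff (Gamma_ne_zero_of_re_pos (by rw [add_re]; positivity)),
    Gamma_mul_Gamma_eq_betaIntegral ha hb, betaIntegral,
    intervalIntegral.integral_of_le zero_le_one, integral_Ioc_eq_integral_Ioo, mul_comm]

theorem setIntegral_Ioo_pow_mul_cpow_mul_one_sub_cpow (ha : 0 < a.re) (hb : 0 < b.re) (n : ℕ) :
    ∫ u in Ioo (0 : ℝ) 1, (u : ℂ) ^ n * ((u : ℂ) ^ (a - 1) * (1 - (u : ℂ)) ^ (b - 1))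
      = Gamma (a + n) * Gamma b / Gamma (a + n + b) := by
  have han : 0 < (a + n).re := by rw [add_re, natCast_re]; positivity
  rw [← setIntegral_Ioo_cpow_mul_one_sub_cpow han hb]
  refine setIntegral_congr_fun measurableSet_Ioo fun u hu => ?_
  have hu0 : (u : ℂ) ≠ 0 := ofReal_ne_zero.2 hu.1.ne'
  rw [← mul_assoc, ← cpow_natCast, ← cpow_add _ _ hu0, add_sub_right_comm, add_comm (n : ℂ)]

end Beta

section EulerIntegral

variable {a c : ℂ} (z : ℂ)

theorem ae_restrict_Ioo_zero_one_abs_le_one : ∀ᵐ u ∂volume.restrict (Ioo (0 : ℝ) 1), |u| ≤ 1 :=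
  ae_restrict_of_forall_mem measurableSet_Ioo fun _ hu => abs_le.2 ⟨by linarith [hu.1], hu.2.le⟩

theorem integrableOn_Ioo_cexp_mul_cpow_mul_one_sub_cpow (ha : 0 < a.re) (hca : 0 < (c - a).re) :
    IntegrableOn (fun u : ℝ => cexp (z * u) * ((u : ℂ) ^ (a - 1) * (1 - (u : ℂ)) ^ (c - a - 1)))
      (Ioo 0 1) :=
  integrable_cexp_mul_of_abs_le_one (integrableOn_Ioo_cpow_mul_one_sub_cpow ha hca)
    ae_restrict_Ioo_zero_one_abs_le_one z

theorem hasSum_setIntegral_Ioo_cexp_mul_cpow_mul_one_sub_cpow (ha : 0 < a.re)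
    (hca : 0 < (c - a).re) :
    HasSum (fun n : ℕ => Gamma (a + n) * Gamma (c - a) * z ^ n / (Gamma (c + n) * (n ! : ℂ)))
      (∫ u in Ioo (0 : ℝ) 1,
        cexp (z * u) * ((u : ℂ) ^ (a - 1) * (1 - (u : ℂ)) ^ (c - a - 1))) := by
  convert hasSum_integral_cexp_mul (integrableOn_Ioo_cpow_mul_one_sub_cpow ha hca)
    ae_restrict_Ioo_zero_one_abs_le_one z using 1
  funext n
  rw [setIntegral_Ioo_pow_mul_cpow_mul_one_sub_cpow ha hca, show a + n + (c - a) = c + n by ring]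
  ring

end EulerIntegral

section InvSubstitution

variable {E : Type*} [NormedAddCommGroup E] [NormedSpace ℝ E] {s : Set ℝ}

theorem abs_neg_inv_sq (u : ℝ) : |-(u ^ 2)⁻¹| = (u ^ 2)⁻¹ := by
  rw [abs_neg, abs_of_nonneg (by positivity)]

theorem hasDerivWithinAt_inv_of_notMem (hs0 : (0 : ℝ) ∉ s) :
    ∀ u ∈ s, HasDerivWithinAt (fun x : ℝ => x⁻¹) (-(u ^ 2)⁻¹) s u :=
  fun _ hu => (hasDerivAt_inv (ne_of_mem_of_not_mem hu hs0)).hasDerivWithinAt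

theorem integrableOn_inv_iff (hs : MeasurableSet s) (hs0 : (0 : ℝ) ∉ s) (g : ℝ → E) :
    IntegrableOn g s⁻¹ ↔ IntegrableOn (fun u => (u ^ 2)⁻¹ • g u⁻¹) s := by
  simpa only [image_inv_eq_inv, abs_neg_inv_sq] using
    integrableOn_image_iff_integrableOn_abs_deriv_smul hs (hasDerivWithinAt_inv_of_notMem hs0)
      inv_injective.injOn g

theorem setIntegral_inv (hs : MeasurableSet s) (hs0 : (0 : ℝ) ∉ s) (g : ℝ → E) :
    ∫ t in s⁻¹, g t = ∫ u in s, (u ^ 2)⁻¹ • g u⁻¹ := by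
  simpa only [image_inv_eq_inv, abs_neg_inv_sq] using
    integral_image_eq_integral_abs_deriv_smul hs (hasDerivWithinAt_inv_of_notMem hs0)
      inv_injective.injOn g

end InvSubstitution

theorem inv_Ioo_zero_one : (Ioo (0 : ℝ) 1)⁻¹ = Ioi 1 := by
  rw [inv_Ioo_0_left one_pos, inv_one]

theorem ofReal_inv_cpow_of_pos {u : ℝ} (hu : 0 < u) (b : ℂ) :
    ((u⁻¹ : ℝ) : ℂ) ^ b = (u : ℂ) ^ (-b) := by
  rw [ofReal_inv, inv_cpow _ _ (by rw [arg_ofReal_of_nonneg hu.le]; exact Real.pi_ne_zero.symm),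
    cpow_neg]

theorem ofReal_inv_sub_one_cpow {u : ℝ} (hu0 : 0 < u) (hu1 : u ≤ 1) (b : ℂ) :
    (((u⁻¹ : ℝ) : ℂ) - 1) ^ b = (1 - (u : ℂ)) ^ b * (u : ℂ) ^ (-b) := by
  have h : ((u⁻¹ : ℝ) : ℂ) - 1 = ((1 - u : ℝ) : ℂ) * ((u⁻¹ : ℝ) : ℂ) := by
    have hu : (u : ℂ) ≠ 0 := ofReal_ne_zero.2 hu0.ne'
    push_cast
    field_simp
  rw [h, mul_cpow_ofReal_nonneg (sub_nonneg.2 hu1) (inv_nonneg.2 hu0.le),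
    ofReal_inv_cpow_of_pos hu0, ofReal_sub, ofReal_one]

theorem inv_sq_smul_integrand_inv (a c z : ℂ) {u : ℝ} (hu0 : 0 < u) (hu1 : u ≤ 1) :
    (u ^ 2)⁻¹ • (cexp (z / ((u⁻¹ : ℝ) : ℂ)) * ((u⁻¹ : ℝ) : ℂ) ^ (-c) *
        (((u⁻¹ : ℝ) : ℂ) - 1) ^ (c - a - 1))
      = cexp (z * u) * ((u : ℂ) ^ (a - 1) * (1 - (u : ℂ)) ^ (c - a - 1)) := by
  have hu : (u : ℂ) ≠ 0 := ofReal_ne_zero.2 hu0.ne'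
  have hpow : ((u ^ 2)⁻¹ : ℂ) * ((u : ℂ) ^ (-(-c)) * (u : ℂ) ^ (-(c - a - 1)))
      = (u : ℂ) ^ (a - 1) := by
    rw [← cpow_add _ _ hu, ← cpow_natCast, ← cpow_neg, ← cpow_add _ _ hu]
    ring_nf
  rw [real_smul, ofReal_inv_cpow_of_pos hu0, ofReal_inv_sub_one_cpow hu0 hu1, ← hpow]
  simp only [ofReal_inv, ofReal_pow, div_inv_eq_mul]
  ring

theorem Complex.Gamma_add_nat_eq_ascPochhammer_mul {s : ℂ} (hs : ∀ k : ℕ, s ≠ -k) (n : ℕ) :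
    Gamma (s + n) = (ascPochhammer ℂ n).eval s * Gamma s :=
  (div_eq_iff (Gamma_ne_zero hs)).1 (Gamma_add_nat_div_Gamma_eq s hs)

theorem ascPochhammer_eval_ne_zero {R : Type*} [CommRing R] [IsDomain R] {s : R}
    (hs : ∀ k : ℕ, s ≠ -k) (n : ℕ) : (ascPochhammer R n).eval s ≠ 0 := by
  simpa [eq_neg_iff_add_eq_zero, add_comm] using fun k _ => hs k

theorem Complex.ne_neg_natCast_of_re_pos {s : ℂ} (hs : 0 < s.re) (k : ℕ) : s ≠ -k := by
  rintro rfl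
  simp only [neg_re, natCast_re, Left.neg_pos_iff] at hs
  exact (Nat.cast_nonneg k).not_gt hs

/-- integral representation of the confluent function: for
`Re a > 0`, `Re (c-a) > 0`, the integral `∫₁^∞ e^(z/t) t^(-c) (t-1)^(c-a-1) dt`
converges and equals `∑ Γ(a+n) Γ(c-a) zⁿ / (Γ(c+n) n!)`; when `c` is not
a nonpositive integer it equals `(Γ(a)Γ(c-a)/Γ(c)) F(a;c;z)`. -/
theorem confluent_integral_representation (a c z : ℂ)
    (ha : 0 < a.re) (hca : 0 < (c - a).re) :
    IntegrableOn (fun t : ℝ =>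
        Complex.exp (z / t) * (t : ℂ) ^ (-c) * ((t : ℂ) - 1) ^ (c - a - 1))
      (Set.Ioi 1) ∧
    (∫ t in Set.Ioi (1 : ℝ),
        Complex.exp (z / t) * (t : ℂ) ^ (-c) * ((t : ℂ) - 1) ^ (c - a - 1))
      = ∑' n : ℕ, Complex.Gamma (a + n) * Complex.Gamma (c - a) * z ^ n /
          (Complex.Gamma (c + n) * (n.factorial : ℂ)) ∧
    ((∀ n : ℕ, c ≠ -(n : ℂ)) →
      (∫ t in Set.Ioi (1 : ℝ),
          Complex.exp (z / t) * (t : ℂ) ^ (-c) * ((t : ℂ) - 1) ^ (c - a - 1))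
        = Complex.Gamma a * Complex.Gamma (c - a) / Complex.Gamma c *
            ∑' n : ℕ, (ascPochhammer ℂ n).eval a * z ^ n /
              ((ascPochhammer ℂ n).eval c * (n.factorial : ℂ))) := by
  set g : ℝ → ℂ := fun t => cexp (z / t) * (t : ℂ) ^ (-c) * ((t : ℂ) - 1) ^ (c - a - 1)
  have h0 : (0 : ℝ) ∉ Ioo 0 1 := fun h => lt_irrefl _ h.1
  have hsubst : EqOn (fun u : ℝ => (u ^ 2)⁻¹ • g u⁻¹)
      (fun u => cexp (z * u) * ((u : ℂ) ^ (a - 1) * (1 - (u : ℂ)) ^ (c - a - 1))) (Ioo 0 1) :=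
    fun u hu => inv_sq_smul_integrand_inv a c z hu.1 hu.2.le
  have hval : ∫ t in Ioi 1, g t = ∑' n : ℕ, Gamma (a + n) * Gamma (c - a) * z ^ n /
      (Gamma (c + n) * (n ! : ℂ)) := by
    rw [← inv_Ioo_zero_one, setIntegral_inv measurableSet_Ioo h0,
      setIntegral_congr_fun measurableSet_Ioo hsubst]
    exact (hasSum_setIntegral_Ioo_cexp_mul_cpow_mul_one_sub_cpow z ha hca).tsum_eq.symm
  refine ⟨?_, hval, fun hc => ?_⟩
  · rw [← inv_Ioo_zero_one, integrableOn_inv_iff measurableSet_Ioo h0]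
    exact (integrableOn_Ioo_cexp_mul_cpow_mul_one_sub_cpow z ha hca).congr_fun hsubst.symm
      measurableSet_Ioo
  · rw [hval, ← tsum_mul_left]
    refine tsum_congr fun n => ?_
    rw [Gamma_add_nat_eq_ascPochhammer_mul (ne_neg_natCast_of_re_pos ha),
      Gamma_add_nat_eq_ascPochhammer_mul hc]
    field_simp [Gamma_ne_zero hc, ascPochhammer_eval_ne_zero hc n]
end

section
/- Let c ∈ ℂ with Re c > 1/2 and let w ∈ ℂ. Then the Poisson formula holds: ∫_{−1}^{1} (1−t²)^{c−3/2} e^{tw} dt = Γ(c−1/2) √π · ∑_{j=0}^∞ (w²/4)^j / (Γ(c+j) j!), where (1−t²)^{c−3/2} is defined via the principal power of the positive real number 1−t² for −1 < t < 1; both sides are entire functions of w. -/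
/-!
Expand `exp (t w) = ∑ (t w)ⁿ / n!` and integrate term by term against the weight
`(1 - t²)^(c - 3/2)`, which is integrable on `[-1, 1]` because `Re c > 1/2`. The odd moments
vanish by symmetry; the substitution `x = t²` turns the even moments into Beta integrals
`B(j + 1/2, c - 1/2) = Γ(j + 1/2) Γ(c - 1/2) / Γ(c + j)`, and Legendre's duplication formula
gives `Γ(j + 1/2) / (2j)! = √π / (4ʲ j!)`.
-/

open Complex MeasureTheory Set intervalIntegral
open scoped Nat

section Symmetry

variable {E : Type*} [NormedAddCommGroup E] {f : ℝ → E}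

lemma Function.Odd.integral_neg_self_eq_zero [NormedSpace ℝ E] (hf : Function.Odd f) (a : ℝ) :
    ∫ x in -a..a, f x = 0 := by
  have h := integral_comp_neg (a := -a) (b := a) f
  simp only [hf _, intervalIntegral.integral_neg, neg_neg] at h
  have h2 : (2 : ℝ) • ∫ x in -a..a, f x = 0 := by
    rw [two_smul]
    nth_rewrite 1 [← h]
    exact neg_add_cancel _
  exact (smul_eq_zero.mp h2).resolve_left two_ne_zero

lemma Function.Even.intervalIntegrable_neg {a : ℝ} (hf : Function.Even f)
    (h : IntervalIntegrable f volume 0 a) : IntervalIntegrable f volume (-a) 0 := by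
  simpa only [hf _, neg_zero] using (IntervalIntegrable.iff_comp_neg).mp h.symm

lemma Function.Even.intervalIntegrable_neg_self {a : ℝ} (hf : Function.Even f)
    (h : IntervalIntegrable f volume 0 a) : IntervalIntegrable f volume (-a) a :=
  (hf.intervalIntegrable_neg h).trans h

lemma Function.Even.integral_neg_self [NormedSpace ℝ E] {a : ℝ} (hf : Function.Even f)
    (h : IntervalIntegrable f volume 0 a) :
    ∫ x in -a..a, f x = (2 : ℝ) • ∫ x in 0..a, f x := by
  have hneg : ∫ x in -a..0, f x = ∫ x in 0..a, f x := by
    simpa only [hf _, neg_zero] using (integral_comp_neg (a := 0) (b := a) f).symm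
  rw [← integral_add_adjacent_intervals (hf.intervalIntegrable_neg h) h, hneg, two_smul]

end Symmetry

section SquareSubstitution

variable {E : Type*} [NormedAddCommGroup E] [NormedSpace ℝ E] {a b : ℝ}

lemma integral_two_mul_smul_comp_sq (ha : 0 ≤ a) (hab : a ≤ b) (g : ℝ → E) :
    ∫ t in a..b, (2 * t) • g (t ^ 2) = ∫ x in a ^ 2..b ^ 2, g x := by
  rw [integral_of_le hab, integral_of_le (pow_le_pow_left₀ ha hab 2),
    ← integral_Icc_eq_integral_Ioc, ← integral_Icc_eq_integral_Ioc]
  exact integral_Icc_deriv_smul_of_deriv_nonneg (continuous_pow 2).continuousOn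
    (fun t _ => by simpa using hasDerivAt_pow 2 t) (fun t ht => by linarith [ht.1]) hab

lemma intervalIntegrable_two_mul_smul_comp_sq_iff (ha : 0 ≤ a) (hab : a ≤ b) (g : ℝ → E) :
    IntervalIntegrable (fun t => (2 * t) • g (t ^ 2)) volume a b ↔
      IntervalIntegrable g volume (a ^ 2) (b ^ 2) := by
  rw [intervalIntegrable_iff_integrableOn_Icc_of_le hab,
    intervalIntegrable_iff_integrableOn_Icc_of_le (pow_le_pow_left₀ ha hab 2)]
  exact integrableOn_Icc_deriv_smul_iff_of_deriv_nonneg (continuous_pow 2).continuousOn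
    (fun t _ => by simpa using hasDerivAt_pow 2 t) (fun t ht => by linarith [ht.1]) hab

end SquareSubstitution

lemma hasSum_integral_mul_exp_mul {g : ℝ → ℂ} {a b : ℝ} (hg : IntervalIntegrable g volume a b)
    (w : ℂ) :
    HasSum (fun n : ℕ => (∫ t in a..b, g t * (t : ℂ) ^ n) * (w ^ n / n !))
      (∫ t in a..b, g t * exp (t * w)) := by
  have hexp (t : ℝ) :
      HasSum (fun n : ℕ => g t * ((t * w) ^ n / n !)) (g t * exp (t * w)) := by
    rw [exp_eq_exp_ℂ]
    exact (NormedSpace.expSeries_div_hasSum_exp ((t : ℂ) * w)).mul_left (g t)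
  have hnorm (t : ℝ) : HasSum (fun n : ℕ => ‖g t * ((t * w) ^ n / n !)‖)
      (‖g t‖ * Real.exp ‖(t : ℂ) * w‖) := by
    rw [Real.exp_eq_exp_ℝ]
    simpa only [norm_mul, norm_div, norm_pow, norm_natCast] using
      (NormedSpace.expSeries_div_hasSum_exp ‖(t : ℂ) * w‖).mul_left ‖g t‖
  have hsum := hasSum_integral_of_dominated_convergence
    (F := fun n t => g t * ((t * w) ^ n / n !)) (fun n t => ‖g t * ((t * w) ^ n / n !)‖)
    (fun n => hg.def'.aestronglyMeasurable.mul (by fun_prop : Continuous _).aestronglyMeasurable)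
    (fun n => .of_forall fun t _ => le_rfl)
    (.of_forall fun t _ => (hnorm t).summable)
    (by
      simp_rw [fun t => (hnorm t).tsum_eq]
      exact hg.norm.mul_continuousOn (by fun_prop))
    (.of_forall fun t _ => hexp t)
  have hterm (n : ℕ) : (∫ t in a..b, g t * (t : ℂ) ^ n) * (w ^ n / n !) =
      ∫ t in a..b, g t * ((t * w) ^ n / n !) := by
    rw [← intervalIntegral.integral_mul_const]
    congr 1 with t
    ring
  simpa only [hterm] using hsum

noncomputable def betaIntegrand (u v : ℂ) (x : ℝ) : ℂ := (x : ℂ) ^ (u - 1) * (1 - (x : ℂ)) ^ (v - 1)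

lemma betaIntegral_eq_integral_betaIntegrand (u v : ℂ) :
    betaIntegral u v = ∫ x in (0 : ℝ)..1, betaIntegrand u v x := rfl

lemma Complex.Gamma_nat_add_half (j : ℕ) :
    Gamma ((j : ℂ) + 1 / 2) = (2 * j)! * (Real.sqrt Real.pi : ℂ) / (4 ^ j * j !) := by
  have h := Gamma_mul_Gamma_add_half ((j : ℂ) + 1 / 2)
  rw [show (j : ℂ) + 1 / 2 + 1 / 2 = j + 1 by ring, Gamma_nat_eq_factorial,
    show 2 * ((j : ℂ) + 1 / 2) = ((2 * j : ℕ) : ℂ) + 1 by push_cast; ring, Gamma_nat_eq_factorial,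
    show (1 : ℂ) - (((2 * j : ℕ) : ℂ) + 1) = -((2 * j : ℕ) : ℂ) by ring, cpow_neg, cpow_natCast,
    pow_mul] at h
  have h4 : (4 : ℂ) ^ j ≠ 0 := pow_ne_zero _ (by norm_num)
  rw [eq_div_iff (mul_ne_zero h4 (Nat.cast_ne_zero.mpr j.factorial_ne_zero)), mul_left_comm, h]
  norm_num
  field_simp

noncomputable def poissonWeight (c : ℂ) (t : ℝ) : ℂ := ((1 - t ^ 2 : ℝ) : ℂ) ^ (c - 3 / 2)

lemma poissonWeight_even (c : ℂ) : Function.Even (poissonWeight c) := fun t => by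
  simp [poissonWeight]

lemma sq_cpow_nat_add_half_sub_one_mul_self {t : ℝ} (ht : 0 < t) (j : ℕ) :
    ((t ^ 2 : ℝ) : ℂ) ^ ((j : ℂ) + 1 / 2 - 1) * t = (t : ℂ) ^ (2 * j) := by
  have ht' : (t : ℂ) ≠ 0 := ofReal_ne_zero.mpr ht.ne'
  have harg : (t : ℂ).arg = 0 := arg_ofReal_of_nonneg ht.le
  rw [ofReal_pow, ← cpow_ofNat_mul' (by simp [harg, Real.pi_pos]) (by simp [harg, Real.pi_pos.le]),
    show (2 : ℂ) * ((j : ℂ) + 1 / 2 - 1) = ((2 * j : ℕ) : ℂ) - 1 by push_cast; ring,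
    cpow_sub _ _ ht', cpow_one, cpow_natCast, div_mul_cancel₀ _ ht']

lemma two_mul_smul_betaIntegrand_sq_eqOn (c : ℂ) (j : ℕ) :
    EqOn (fun t : ℝ => (2 * t) • betaIntegrand ((j : ℂ) + 1 / 2) (c - 1 / 2) (t ^ 2))
      (fun t => (2 : ℝ) • (poissonWeight c t * (t : ℂ) ^ (2 * j))) (uIoc 0 1) := fun t ht => by
  have ht : 0 < t := by simpa using ht.1
  simp only [betaIntegrand]
  rw [← sq_cpow_nat_add_half_sub_one_mul_self ht j, poissonWeight, real_smul, real_smul,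
    show c - 1 / 2 - 1 = c - 3 / 2 by ring]
  push_cast
  ring

lemma re_nat_add_half_pos (j : ℕ) : 0 < ((j : ℂ) + 1 / 2).re := by
  simp only [add_re, natCast_re, div_ofNat_re, one_re]
  positivity

section Moments

variable {c : ℂ}

lemma re_sub_half_pos (hc : 1 / 2 < c.re) : 0 < (c - 1 / 2).re := by
  simp only [sub_re, div_ofNat_re, one_re]
  linarith

lemma intervalIntegrable_poissonWeight_mul_pow_two_mul (hc : 1 / 2 < c.re) (j : ℕ) :
    IntervalIntegrable (fun t => poissonWeight c t * (t : ℂ) ^ (2 * j)) volume 0 1 := by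
  have hβ : IntervalIntegrable (betaIntegrand ((j : ℂ) + 1 / 2) (c - 1 / 2)) volume
      (0 ^ 2) (1 ^ 2) := by
    rw [zero_pow two_ne_zero, one_pow]
    exact betaIntegral_convergent (re_nat_add_half_pos j) (re_sub_half_pos hc)
  have h := (intervalIntegrable_congr (two_mul_smul_betaIntegrand_sq_eqOn c j)).mp
    ((intervalIntegrable_two_mul_smul_comp_sq_iff le_rfl zero_le_one _).mpr hβ)
  convert h.smul (2⁻¹ : ℝ) using 1
  ext t
  rw [Pi.smul_apply, smul_smul, inv_mul_cancel₀ two_ne_zero, one_smul]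

lemma integral_poissonWeight_mul_pow_two_mul_zero_one (c : ℂ) (j : ℕ) :
    ∫ t in (0 : ℝ)..1, poissonWeight c t * (t : ℂ) ^ (2 * j) =
      betaIntegral ((j : ℂ) + 1 / 2) (c - 1 / 2) / 2 := by
  have h := integral_two_mul_smul_comp_sq le_rfl zero_le_one
    (betaIntegrand ((j : ℂ) + 1 / 2) (c - 1 / 2))
  rw [intervalIntegral.integral_congr_ae
      (.of_forall fun _ ht => two_mul_smul_betaIntegrand_sq_eqOn c j ht),
    intervalIntegral.integral_smul, zero_pow two_ne_zero, one_pow] at h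
  rw [betaIntegral_eq_integral_betaIntegrand, ← h, real_smul]
  push_cast
  ring

lemma intervalIntegrable_poissonWeight (hc : 1 / 2 < c.re) :
    IntervalIntegrable (poissonWeight c) volume (-1) 1 :=
  (poissonWeight_even c).intervalIntegrable_neg_self
    (by simpa using intervalIntegrable_poissonWeight_mul_pow_two_mul hc 0)

lemma integral_poissonWeight_mul_pow_of_odd (c : ℂ) {n : ℕ} (hn : Odd n) :
    ∫ t in (-1 : ℝ)..1, poissonWeight c t * (t : ℂ) ^ n = 0 :=
  Function.Odd.integral_neg_self_eq_zero
    (fun t => by simp only [poissonWeight_even c t, ofReal_neg, hn.neg_pow, mul_neg]) 1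

lemma integral_poissonWeight_mul_pow_two_mul (hc : 1 / 2 < c.re) (j : ℕ) :
    ∫ t in (-1 : ℝ)..1, poissonWeight c t * (t : ℂ) ^ (2 * j) =
      Gamma ((j : ℂ) + 1 / 2) * Gamma (c - 1 / 2) / Gamma (c + j) := by
  have heven : Function.Even fun t : ℝ => poissonWeight c t * (t : ℂ) ^ (2 * j) := fun t => by
    simp only [poissonWeight_even c t, ofReal_neg, (even_two_mul j).neg_pow]
  rw [heven.integral_neg_self (intervalIntegrable_poissonWeight_mul_pow_two_mul hc j),
    integral_poissonWeight_mul_pow_two_mul_zero_one,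
    betaIntegral_eq_Gamma_mul_div _ _ (re_nat_add_half_pos j) (re_sub_half_pos hc),
    show (j : ℂ) + 1 / 2 + (c - 1 / 2) = c + j by ring, real_smul]
  push_cast
  ring

end Moments

/-- the Poisson formula: for `Re c > 1/2` and any `w ∈ ℂ`,
`∫₋₁¹ (1-t²)^(c-3/2) e^(tw) dt = Γ(c-1/2) √π ∑ⱼ (w²/4)ʲ/(Γ(c+j) j!)`. -/
theorem poisson_formula (c w : ℂ) (hc : 1 / 2 < c.re) :
    (∫ t in (-1 : ℝ)..1,
        ((1 - t ^ 2 : ℝ) : ℂ) ^ (c - 3 / 2) * Complex.exp (t * w))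
      = Complex.Gamma (c - 1 / 2) * (Real.sqrt Real.pi : ℂ) *
          ∑' j : ℕ, (w ^ 2 / 4) ^ j /
            (Complex.Gamma (c + j) * (j.factorial : ℂ)) := by
  have hseries := hasSum_integral_mul_exp_mul (intervalIntegrable_poissonWeight hc) w
  have hodd : ∀ n ∉ range (2 * ·), (∫ t in (-1 : ℝ)..1, poissonWeight c t * (t : ℂ) ^ n) *
      (w ^ n / n !) = 0 := fun n hn => by
    have hn' : Odd n := Nat.not_even_iff_odd.mp fun ⟨k, hk⟩ => hn ⟨k, by simp only [hk, two_mul]⟩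
    rw [integral_poissonWeight_mul_pow_of_odd c hn', zero_mul]
  have heven := ((mul_right_injective₀ two_ne_zero).hasSum_iff hodd).mpr hseries
  have hterm (j : ℕ) : Gamma (c - 1 / 2) * (Real.sqrt Real.pi : ℂ) *
      ((w ^ 2 / 4) ^ j / (Gamma (c + j) * j !)) =
      (∫ t in (-1 : ℝ)..1, poissonWeight c t * (t : ℂ) ^ (2 * j)) * (w ^ (2 * j) / (2 * j)!) := by
    have hΓ : Gamma (c + j) ≠ 0 :=
      Gamma_ne_zero_of_re_pos (by rw [add_re, natCast_re]; linarith [j.cast_nonneg (α := ℝ)])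
    have h2j : ((2 * j)! : ℂ) ≠ 0 := Nat.cast_ne_zero.mpr (Nat.factorial_ne_zero _)
    rw [integral_poissonWeight_mul_pow_two_mul hc, Gamma_nat_add_half, div_pow, pow_mul]
    field_simp
  rw [← tsum_mul_left, (heven.congr_fun hterm).tsum_eq]
  rfl
end

section
/- Kummer's first transformation: let a, c ∈ ℂ with c ∉ {0,−1,−2,…}. Then for every z ∈ ℂ, ∑_{n=0}^∞ (a)_n z^n/((c)_n n!) = e^{z} · ∑_{n=0}^∞ (c−a)_n (−z)^n/((c)_n n!), i.e. F(a;c;z) = e^{z} F(c−a;c;−z). -/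
open Complex

open Polynomial in
private lemma asc_eval_succ_left' (x : ℂ) (n : ℕ) :
    (ascPochhammer ℂ (n+1)).eval x = x * (ascPochhammer ℂ n).eval (x+1) := by
  rw [ascPochhammer_succ_left, Polynomial.eval_mul, Polynomial.eval_X, Polynomial.eval_comp]
  simp

open Polynomial in
private lemma asc_eval_add' (x : ℂ) (l m : ℕ) :
    (ascPochhammer ℂ (l+m)).eval x
      = (ascPochhammer ℂ l).eval x * (ascPochhammer ℂ m).eval (x + l) := by
  rw [← ascPochhammer_mul, Polynomial.eval_mul, Polynomial.eval_comp]
  simp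

open Polynomial in
private lemma asc_eval_ne_zero' {c : ℂ} (hc : ∀ n : ℕ, c ≠ -(n : ℂ)) (n : ℕ) :
    (ascPochhammer ℂ n).eval c ≠ 0 := by
  induction n with
  | zero => simp
  | succ n ih =>
    rw [ascPochhammer_succ_eval]
    exact mul_ne_zero ih (fun h => hc n (by linear_combination h))

open Polynomial Finset in
private lemma vandermonde' (n : ℕ) : ∀ a c : ℂ,
    ∑ l ∈ Finset.range (n+1), (n.choose l : ℂ) * (-1)^l *
        (ascPochhammer ℂ l).eval (c - a) * (ascPochhammer ℂ (n-l)).eval (c + l)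
      = (ascPochhammer ℂ n).eval a := by
  induction n with
  | zero => intro a c; simp
  | succ n ih =>
    intro a c
    set P : ℕ → ℂ := fun l => (ascPochhammer ℂ l).eval (c - a) with hP
    set g : ℕ → ℂ := fun l => (n.choose l : ℂ) * (-1)^l * P l *
        (ascPochhammer ℂ (n+1-l)).eval (c + l) with hg
    have key : ∀ l ∈ Finset.range (n+1),
        (((n+1).choose (l+1) : ℕ) : ℂ) * (-1)^(l+1) * P (l+1) *
            (ascPochhammer ℂ (n+1-(l+1))).eval (c + ((l:ℕ)+1 : ℕ))
          = ((n.choose l : ℂ) * (-1)^(l+1) * P (l+1) *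
              (ascPochhammer ℂ (n-l)).eval (c + ((l:ℕ)+1 : ℕ)))
            + g (l+1) := by
      intro l hl
      have h1 : n + 1 - (l+1) = n - l := by omega
      rw [hg]
      simp only [Nat.choose_succ_succ, Nat.cast_add, h1]
      ring
    rw [Finset.sum_range_succ']
    rw [Finset.sum_congr rfl key, Finset.sum_add_distrib]
    have hg0 : ((n+1).choose 0 : ℂ) * (-1)^0 * P 0 *
        (ascPochhammer ℂ (n+1-0)).eval (c + (0:ℕ)) = g 0 := by
      simp [hg, hP]
    rw [hg0, add_assoc]
    have hA : (∑ l ∈ Finset.range (n+1), g (l+1)) + g 0 = ∑ l ∈ Finset.range (n+1), g l := by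
      rw [← Finset.sum_range_succ']
      rw [Finset.sum_range_succ]
      have : g (n+1) = 0 := by simp [hg]
      rw [this, add_zero]
    rw [hA, ← Finset.sum_add_distrib]
    have step : ∀ l ∈ Finset.range (n+1),
        ((n.choose l : ℂ) * (-1)^(l+1) * P (l+1) *
            (ascPochhammer ℂ (n-l)).eval (c + ((l:ℕ)+1 : ℕ))) + g l
          = a * ((n.choose l : ℂ) * (-1)^l *
              (ascPochhammer ℂ l).eval ((c+1) - (a+1)) *
              (ascPochhammer ℂ (n-l)).eval ((c+1) + l)) := by
      intro l hl
      have hl' : l ≤ n := by simpa [Nat.lt_succ_iff] using hl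
      have h1 : n + 1 - l = (n - l) + 1 := by omega
      have h2 : (ascPochhammer ℂ (n+1-l)).eval (c + l)
          = (c + l) * (ascPochhammer ℂ (n-l)).eval (c + l + 1) := by
        rw [h1, asc_eval_succ_left']
      have h3 : P (l+1) = P l * (c - a + l) := by
        rw [hP]; simp [ascPochhammer_succ_eval]
      have h4 : (c+1) - (a+1) = c - a := by ring
      simp only [hg]
      rw [h2, h3, h4]
      simp only [hP]
      push_cast
      ring
    rw [Finset.sum_congr rfl step, ← Finset.mul_sum, ih (a+1) (c+1),
      ← asc_eval_succ_left']

open Polynomial in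
private lemma norm_lower_bound' (c : ℂ) (hc : ∀ n : ℕ, c ≠ -(n : ℂ)) :
    ∃ δ > 0, ∀ n : ℕ, δ ≤ ‖c + n‖ := by
  set N : ℕ := ⌈‖c‖⌉₊ + 1 with hN
  have hne : (Finset.range N).Nonempty := ⟨0, by simp [hN]⟩
  set δ₀ : ℝ := (Finset.range N).inf' hne (fun n => ‖c + n‖) with hδ₀
  refine ⟨min 1 δ₀, ?_, ?_⟩
  · apply lt_min one_pos
    rw [hδ₀, Finset.lt_inf'_iff]
    intro n _
    rw [norm_pos_iff]
    intro h
    exact hc n (by linear_combination h)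
  · intro n
    rcases lt_or_ge n N with h | h
    · exact le_trans (min_le_right _ _)
        (Finset.inf'_le _ (Finset.mem_range.2 h))
    · refine le_trans (min_le_left _ _) ?_
      have h1 : ‖(n:ℂ)‖ ≤ ‖c + n‖ + ‖c‖ := by
        have := norm_sub_le (c + (n:ℂ)) c
        simpa using this
      have h2 : (N:ℝ) ≤ ‖(n:ℂ)‖ := by
        rw [Complex.norm_natCast]; exact_mod_cast h
      have h3 : ‖c‖ + 1 ≤ (N:ℝ) := by
        rw [hN]; push_cast
        have := Nat.le_ceil ‖c‖
        linarith
      linarith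

open Polynomial in
private lemma poch_norm_bound' (b c : ℂ) (hc : ∀ n : ℕ, c ≠ -(n : ℂ)) :
    ∃ K : ℝ, 0 ≤ K ∧ ∀ n : ℕ,
      ‖(ascPochhammer ℂ n).eval b‖ ≤ K ^ n * ‖(ascPochhammer ℂ n).eval c‖ := by
  obtain ⟨δ, hδ, hδle⟩ := norm_lower_bound' c hc
  refine ⟨1 + ‖b - c‖ / δ, by positivity, ?_⟩
  intro n
  induction n with
  | zero => simp
  | succ n ih =>
    rw [ascPochhammer_succ_eval, ascPochhammer_succ_eval, norm_mul, norm_mul]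
    have h1 : ‖b + n‖ ≤ (1 + ‖b - c‖ / δ) * ‖c + n‖ := by
      have h2 : ‖b + n‖ ≤ ‖c + n‖ + ‖b - c‖ := by
        have : b + (n:ℂ) = (c + n) + (b - c) := by ring
        rw [this]; exact norm_add_le _ _
      have h3 : ‖b - c‖ ≤ ‖b - c‖ / δ * ‖c + n‖ := by
        rw [div_mul_eq_mul_div, le_div_iff₀ hδ]
        exact mul_le_mul_of_nonneg_left (hδle n) (norm_nonneg _)
      nlinarith [hδle n, norm_nonneg (b - c)]
    calc ‖(ascPochhammer ℂ n).eval b‖ * ‖b + n‖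
        ≤ ((1 + ‖b - c‖ / δ) ^ n * ‖(ascPochhammer ℂ n).eval c‖) *
            ((1 + ‖b - c‖ / δ) * ‖c + n‖) := by
          apply mul_le_mul ih h1 (norm_nonneg _)
          positivity
      _ = (1 + ‖b - c‖ / δ) ^ (n+1) * (‖(ascPochhammer ℂ n).eval c‖ * ‖c + n‖) := by ring

open Polynomial in
private lemma summable_F' (b c : ℂ) (hc : ∀ n : ℕ, c ≠ -(n : ℂ)) (z : ℂ) :
    Summable (fun n : ℕ => ‖(ascPochhammer ℂ n).eval b * z ^ n /
        ((ascPochhammer ℂ n).eval c * (n.factorial : ℂ))‖) := by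
  obtain ⟨K, hK, hKle⟩ := poch_norm_bound' b c hc
  refine Summable.of_nonneg_of_le (fun n => norm_nonneg _) (fun n => ?_)
    (Real.summable_pow_div_factorial (K * ‖z‖))
  have hcpos : 0 < ‖(ascPochhammer ℂ n).eval c‖ :=
    norm_pos_iff.2 (asc_eval_ne_zero' hc n)
  have hfpos : (0:ℝ) < (n.factorial : ℝ) := by exact_mod_cast Nat.factorial_pos n
  rw [norm_div, norm_mul, norm_mul, norm_pow, Complex.norm_natCast]
  have step1 : ‖(ascPochhammer ℂ n).eval b‖ * ‖z‖ ^ n /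
        (‖(ascPochhammer ℂ n).eval c‖ * (n.factorial : ℝ))
      ≤ (K ^ n * ‖(ascPochhammer ℂ n).eval c‖) * ‖z‖ ^ n /
        (‖(ascPochhammer ℂ n).eval c‖ * (n.factorial : ℝ)) := by
    gcongr
    exact hKle n
  refine step1.trans (le_of_eq ?_)
  have h5 : K ^ n * ‖(ascPochhammer ℂ n).eval c‖ * ‖z‖ ^ n
      = ‖(ascPochhammer ℂ n).eval c‖ * (K ^ n * ‖z‖ ^ n) := by ring
  rw [mul_pow, h5, mul_div_mul_left _ _ (ne_of_gt hcpos)]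

/-- Kummer's first transformation:
`F(a;c;z) = e^z F(c-a;c;-z)` for `c` not a nonpositive integer. -/
theorem kummer_first_transformation (a c : ℂ) (hc : ∀ n : ℕ, c ≠ -(n : ℂ)) :
    ∀ z : ℂ,
      (∑' n : ℕ, (ascPochhammer ℂ n).eval a * z ^ n /
          ((ascPochhammer ℂ n).eval c * (n.factorial : ℂ)))
        = Complex.exp z *
            ∑' n : ℕ, (ascPochhammer ℂ n).eval (c - a) * (-z) ^ n /
              ((ascPochhammer ℂ n).eval c * (n.factorial : ℂ)) := by
  intro z
  have hexp : Complex.exp z = ∑' n : ℕ, z ^ n / (n.factorial : ℂ) := by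
    rw [Complex.exp_eq_exp_ℂ, NormedSpace.exp_eq_tsum_div]
  rw [hexp, mul_comm]
  have hf := summable_F' (c - a) c hc (-z)
  have hg : Summable fun k : ℕ => ‖z ^ k / (k.factorial : ℂ)‖ := by
    simp only [norm_div, norm_pow, Complex.norm_natCast]
    exact Real.summable_pow_div_factorial ‖z‖
  rw [tsum_mul_tsum_eq_tsum_sum_range_of_summable_norm hf hg]
  apply tsum_congr
  intro n
  rw [← vandermonde' n a c, Finset.sum_mul, Finset.sum_div]
  apply Finset.sum_congr rfl
  intro l hl
  have hl' : l ≤ n := Nat.lt_succ_iff.1 (Finset.mem_range.1 hl)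
  have hcl : (ascPochhammer ℂ l).eval c ≠ 0 := asc_eval_ne_zero' hc l
  have hsplit : (ascPochhammer ℂ n).eval c
      = (ascPochhammer ℂ l).eval c * (ascPochhammer ℂ (n-l)).eval (c + l) := by
    conv_lhs => rw [show n = l + (n - l) by omega]
    exact asc_eval_add' c l (n - l)
  have hcr : (ascPochhammer ℂ (n-l)).eval (c + l) ≠ 0 := by
    intro h; exact asc_eval_ne_zero' hc n (by rw [hsplit, h, mul_zero])
  have hzz : z ^ l * z ^ (n-l) = z ^ n := by
    rw [← pow_add]; congr 1; omega
  have hzneg : (-z) ^ l = (-1:ℂ)^l * z ^ l := by rw [neg_pow]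
  have hfact : (n.factorial : ℂ) = (n.choose l : ℂ) * (l.factorial : ℂ) * ((n-l).factorial : ℂ) := by
    rw [← Nat.cast_mul, ← Nat.cast_mul]
    congr 1
    rw [← Nat.choose_mul_factorial_mul_factorial hl']
  have hlf : (l.factorial : ℂ) ≠ 0 := Nat.cast_ne_zero.2 (Nat.factorial_ne_zero l)
  have hnlf : ((n-l).factorial : ℂ) ≠ 0 := Nat.cast_ne_zero.2 (Nat.factorial_ne_zero (n-l))
  have hnf : (n.factorial : ℂ) ≠ 0 := Nat.cast_ne_zero.2 (Nat.factorial_ne_zero n)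
  have hchoose : (n.choose l : ℂ) ≠ 0 :=
    Nat.cast_ne_zero.2 (Nat.choose_pos hl').ne'
  rw [hsplit, hzneg, hfact, ← hzz]
  field_simp
end

section
/- Euler's transformation: let a, b, c ∈ ℂ with c ∉ {0,−1,−2,…}, and let z ∈ ℂ with |z| < 1. Then F(a,b;c;z) = (1−z)^{c−a−b} F(c−a,c−b;c;z), where (1−z)^{c−a−b} is the principal power (well defined since Re(1−z) > 0). -/
/-!
Expand `(1 - z) ^ (c - a - b) = (1 - z) ^ (-(a + b - c))` as the binomial series
`∑ (a + b - c)ₗ zˡ / l!` and multiply it with `F(c - a, c - b; c; z)` by the Cauchy product. The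
coefficient of `zⁿ` is a terminating sum, which the Pfaff–Saalschütz identity evaluates to
`(a)ₙ (b)ₙ / ((c)ₙ n!)`. Saalschütz's identity in turn follows by induction on `n`: passing from
`n` to `n + 1` multiplies each summand by `(c - a + n) (c - b + n)` up to terms that telescope.
-/

open Finset

section Pochhammer

variable {R : Type*} [CommSemiring R]

theorem ascPochhammer_eval_succ_left (x : R) (n : ℕ) :
    (ascPochhammer R (n + 1)).eval x = x * (ascPochhammer R n).eval (x + 1) := by
  simp [ascPochhammer_succ_left]

theorem ascPochhammer_eval_add (x : R) (k l : ℕ) :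
    (ascPochhammer R (k + l)).eval x =
      (ascPochhammer R k).eval x * (ascPochhammer R l).eval (x + k) := by
  simp [← ascPochhammer_mul]

end Pochhammer

section Saalschutz

variable {R : Type*} [CommRing R]

noncomputable def saalschutzTerm (a b c : R) (n k : ℕ) : R :=
  n.choose k * (ascPochhammer R k).eval a * (ascPochhammer R k).eval b *
    (ascPochhammer R (n - k)).eval (c - a - b) * (ascPochhammer R (n - k)).eval (c + k)

variable (a b c : R)

theorem saalschutzTerm_of_lt {n k : ℕ} (h : n < k) : saalschutzTerm a b c n k = 0 := by
  simp [saalschutzTerm, Nat.choose_eq_zero_of_lt h]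

theorem saalschutzTerm_succ_zero (n : ℕ) :
    saalschutzTerm a b c (n + 1) 0 =
      ((c - a + n) * (c - b + n) - a * b) * saalschutzTerm a b c n 0 := by
  simp only [saalschutzTerm, Nat.choose_zero_right, Nat.sub_zero, ascPochhammer_succ_eval]
  push_cast
  ring

theorem saalschutzTerm_succ_succ (n j : ℕ) :
    saalschutzTerm a b c (n + 1) (j + 1) =
      (c - a + n) * (c - b + n) * saalschutzTerm a b c n (j + 1) +
        ((a + j) * (b + j) * saalschutzTerm a b c n j -
          (a + (j + 1 : ℕ)) * (b + (j + 1 : ℕ)) * saalschutzTerm a b c n (j + 1)) := by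
  rcases lt_trichotomy j n with hjn | rfl | hnj
  · obtain ⟨m, rfl⟩ := Nat.exists_eq_add_of_lt hjn
    have pascal := congrArg (Nat.cast : ℕ → R) (Nat.choose_succ_succ (j + m + 1) j)
    have ratio := congrArg (Nat.cast : ℕ → R) (Nat.choose_succ_right_eq (j + m + 1) j)
    simp only [saalschutzTerm, show j + m + 1 + 1 - (j + 1) = m + 1 by omega,
      show j + m + 1 - (j + 1) = m by omega, show j + m + 1 - j = m + 1 by omega,
      ascPochhammer_succ_eval, ascPochhammer_eval_succ_left (c + j)] at ratio ⊢
    push_cast at pascal ratio ⊢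
    rw [show c + (j + 1 : R) = c + j + 1 by ring]
    set E := (ascPochhammer R j).eval a * (ascPochhammer R j).eval b *
      (ascPochhammer R m).eval (c - a - b) * (ascPochhammer R m).eval (c + j + 1)
    linear_combination
      (a + j) * (b + j) * (c - a - b + m) * E * ((c + j + 1 + m) * pascal - ratio)
  · simp [saalschutzTerm, ascPochhammer_succ_eval]
    ring
  · simp [saalschutzTerm_of_lt, hnj, hnj.trans (Nat.lt_succ_self _)]

/-- The Pfaff–Saalschütz identity
`₃F₂(-n, a, b; c, 1 + a + b - c - n; 1) = (c - a)ₙ (c - b)ₙ / ((c)ₙ (c - a - b)ₙ)`,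
multiplied out so that no denominators occur. -/
theorem sum_range_saalschutzTerm (n : ℕ) :
    ∑ k ∈ range (n + 1), saalschutzTerm a b c n k =
      (ascPochhammer R n).eval (c - a) * (ascPochhammer R n).eval (c - b) := by
  induction n with
  | zero => simp [saalschutzTerm]
  | succ n ih =>
    set T := saalschutzTerm a b c n
    set P := (c - a + n) * (c - b + n)
    set t : ℕ → R := fun j => (a + j) * (b + j) * T j
    calc ∑ k ∈ range (n + 1 + 1), saalschutzTerm a b c (n + 1) k
        = ∑ j ∈ range (n + 1), (P * T (j + 1) + (t j - t (j + 1))) + (P * T 0 - t 0) := by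
          rw [sum_range_succ']
          simp only [saalschutzTerm_succ_succ, saalschutzTerm_succ_zero, T, t, P, Nat.cast_succ]
          ring
      _ = P * ∑ k ∈ range (n + 1 + 1), T k - t (n + 1) := by
          rw [sum_add_distrib, sum_range_sub', ← mul_sum, sum_range_succ' T]
          ring
      _ = P * ∑ k ∈ range (n + 1), T k := by
          simp [sum_range_succ, T, t, saalschutzTerm_of_lt]
      _ = _ := by
          rw [ih, ascPochhammer_succ_eval, ascPochhammer_succ_eval]
          ring

end Saalschutz

open Nat in
theorem sum_antidiagonal_ordinaryHypergeometricCoefficient_mul {𝕂 : Type*} [Field 𝕂]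
    [CharZero 𝕂] (a b c : 𝕂) (hc : ∀ k : ℕ, (k : 𝕂) ≠ -c) (n : ℕ) :
    ∑ p ∈ antidiagonal n, ordinaryHypergeometricCoefficient (c - a) (c - b) c p.1 *
        ((ascPochhammer 𝕂 p.2).eval (a + b - c) / p.2 !) =
      ordinaryHypergeometricCoefficient a b c n := by
  have hcn : (ascPochhammer 𝕂 n).eval c ≠ 0 := by
    rw [Ne, ascPochhammer_eval_eq_zero_iff]
    rintro ⟨k, -, hk⟩
    exact hc k hk
  have hS := sum_range_saalschutzTerm (c - a) (c - b) c n
  rw [sub_sub_cancel, sub_sub_cancel] at hS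
  calc _ = ∑ p ∈ antidiagonal n, saalschutzTerm (c - a) (c - b) c n p.1 /
        (n ! * (ascPochhammer 𝕂 n).eval c) := by
        refine sum_congr rfl fun ⟨k, l⟩ hkl => ?_
        rw [HasAntidiagonal.mem_antidiagonal] at hkl
        subst hkl
        rw [ascPochhammer_eval_add] at hcn ⊢
        obtain ⟨hck, hckl⟩ := mul_ne_zero_iff.mp hcn
        have hfact := congrArg (Nat.cast : ℕ → 𝕂) (Nat.add_choose_mul_factorial_mul_factorial k l)
        rw [← Nat.choose_symm_add] at hfact
        push_cast at hfact
        have hchoose : ((k + l).choose k : 𝕂) ≠ 0 :=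
          Nat.cast_ne_zero.mpr (Nat.choose_pos (Nat.le_add_right k l)).ne'
        simp only [saalschutzTerm, Nat.add_sub_cancel_left, sub_sub_cancel,
          show a - (c - b) = a + b - c by ring, ← hfact]
        field_simp
    _ = _ := by
        rw [← sum_div,
          Nat.sum_antidiagonal_eq_sum_range_succ fun k _ => saalschutzTerm (c - a) (c - b) c n k, hS]
        field_simp

theorem one_le_radius_ordinaryHypergeometricSeries {𝕂 : Type*} (𝔸 : Type*) [RCLike 𝕂]
    [NormedDivisionRing 𝔸] [NormedAlgebra 𝕂 𝔸] (a b c : 𝕂) (hc : ∀ k : ℕ, (k : 𝕂) ≠ -c) :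
    1 ≤ (ordinaryHypergeometricSeries 𝔸 a b c).radius := by
  by_cases ha : ∃ k : ℕ, (k : 𝕂) = -a
  · obtain ⟨k, hk⟩ := ha
    rw [← neg_neg a, ← hk, ordinaryHypergeometric_radius_top_of_neg_nat₁]
    exact le_top
  by_cases hb : ∃ k : ℕ, (k : 𝕂) = -b
  · obtain ⟨k, hk⟩ := hb
    rw [← neg_neg b, ← hk, ordinaryHypergeometric_radius_top_of_neg_nat₂]
    exact le_top
  push Not at ha hb
  rw [ordinaryHypergeometricSeries_radius_eq_one 𝔸 a b c fun k => ⟨ha k, hb k, hc k⟩]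

open Nat in
theorem Complex.hasFPowerSeriesOnBall_one_sub_cpow_neg (s : ℂ) :
    HasFPowerSeriesOnBall (fun z => (1 - z) ^ (-s))
      (.ofScalars ℂ fun n => (ascPochhammer ℂ n).eval s / n !) 0 1 := by
  have hcoeff (n : ℕ) : Ring.choose (s + n - 1) n = (ascPochhammer ℂ n).eval s / n ! := by
    rw [← Ring.multichoose_eq, eq_div_iff (Nat.cast_ne_zero.mpr n.factorial_ne_zero),
      ← nsmul_eq_mul', Ring.factorial_nsmul_multichoose_eq_ascPochhammer,
      Polynomial.ascPochhammer_smeval_eq_eval]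
  simpa only [hcoeff, one_div, ← cpow_neg] using one_div_one_sub_cpow_hasFPowerSeriesOnBall_zero s

theorem Complex.ordinaryHypergeometric_eq_one_sub_cpow_mul (a b c z : ℂ)
    (hc : ∀ k : ℕ, (k : ℂ) ≠ -c) (hz : ‖z‖ < 1) :
    ₂F₁ a b c z = (1 - z) ^ (c - a - b) * ₂F₁ (c - a) (c - b) c z := by
  have hz' : z ∈ Metric.eball (0 : ℂ) 1 := by simpa [← ofReal_norm] using hz
  set A := ordinaryHypergeometricSeries ℂ (c - a) (c - b) c
  have hB := hasFPowerSeriesOnBall_one_sub_cpow_neg (a + b - c)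
  set B : FormalMultilinearSeries ℂ ℂ ℂ :=
    .ofScalars ℂ fun n => (ascPochhammer ℂ n).eval (a + b - c) / n.factorial
  have hA : Summable fun n => ‖A n fun _ => z‖ :=
    A.summable_norm_apply <| Metric.eball_subset_eball
      (one_le_radius_ordinaryHypergeometricSeries ℂ _ _ _ hc) hz'
  have hB' : Summable fun n => ‖B n fun _ => z‖ :=
    B.summable_norm_apply <| Metric.eball_subset_eball hB.r_le hz'
  have hBsum : ∑' n, B n (fun _ => z) = (1 - z) ^ (c - a - b) := by
    simpa [sub_sub] using (hB.hasSum hz').tsum_eq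
  rw [ordinaryHypergeometric, ordinaryHypergeometric, FormalMultilinearSeries.sum,
    FormalMultilinearSeries.sum, ← hBsum, mul_comm,
    tsum_mul_tsum_eq_tsum_sum_antidiagonal_of_summable_norm hA hB']
  refine tsum_congr fun n => ?_
  simp only [A, B, ordinaryHypergeometricSeries, FormalMultilinearSeries.ofScalars_apply_eq,
    smul_eq_mul]
  rw [← sum_antidiagonal_ordinaryHypergeometricCoefficient_mul a b c hc n, sum_mul]
  refine sum_congr rfl fun p hp => ?_
  rw [← HasAntidiagonal.mem_antidiagonal.mp hp, pow_add]
  ring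

theorem Complex.ordinaryHypergeometric_eq_tsum_div (a b c z : ℂ) :
    ₂F₁ a b c z = ∑' n : ℕ, (ascPochhammer ℂ n).eval a * (ascPochhammer ℂ n).eval b * z ^ n /
      ((ascPochhammer ℂ n).eval c * (n.factorial : ℂ)) := by
  rw [ordinaryHypergeometric_eq_tsum]
  refine tsum_congr fun n => ?_
  rw [smul_eq_mul, div_eq_mul_inv, mul_inv]
  ring

/-- Euler's transformation:
`F(a,b;c;z) = (1-z)^(c-a-b) F(c-a,c-b;c;z)` for `c` not a nonpositive
integer and `|z| < 1`. -/
theorem euler_transformation (a b c z : ℂ) (hc : ∀ n : ℕ, c ≠ -(n : ℂ))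
    (hz : ‖z‖ < 1) :
    (∑' n : ℕ, (ascPochhammer ℂ n).eval a * (ascPochhammer ℂ n).eval b * z ^ n /
        ((ascPochhammer ℂ n).eval c * (n.factorial : ℂ)))
      = (1 - z) ^ (c - a - b) *
          ∑' n : ℕ, (ascPochhammer ℂ n).eval (c - a) *
            (ascPochhammer ℂ n).eval (c - b) * z ^ n /
            ((ascPochhammer ℂ n).eval c * (n.factorial : ℂ)) := by
  rw [← Complex.ordinaryHypergeometric_eq_tsum_div, ← Complex.ordinaryHypergeometric_eq_tsum_div]
  exact Complex.ordinaryHypergeometric_eq_one_sub_cpow_mul a b c z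
    (fun k hk => hc k (neg_eq_iff_eq_neg.mp hk.symm)) hz
end

section
/- Kummer's second transformation: let c ∈ ℂ with c ∉ {0,−1,−2,…} and 2c−1 ∉ {0,−1,−2,…}. Then for every w ∈ ℂ, ∑_{j=0}^∞ (w²/16)^j/((c)_j j!) = e^{−w/2} · ∑_{n=0}^∞ (c−1/2)_n w^n/((2c−1)_n n!); equivalently, F(c; w²/16) = e^{−w/2} F(c−1/2; 2c−1; w), where F(c;·) is the ₀F₁ function and F(a;c;·) the confluent function. -/
/-!
Put `a = c - 1/2` and `M(w) = F(a; 2a; w)`. Kummer's equation `w M'' + (2a - w) M' = a M`, together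
with `(e^{-w/2})' = -e^{-w/2}/2`, shows that `f = e^{-w/2} M` satisfies `w f'' + 2a f' = (w/4) f`.
On coefficients this reads `(n + 2)(n + 1 + 2a) f_{n+2} = f_n / 4`, with `f_0 = 1` and `f_1 = 0`;
this is also the recurrence of the coefficients of `F(c; w²/16) = ∑ w^{2j} / (16^j (c)_j j!)`.
All differential identities are proved for formal power series and transferred to convergent sums
through the Cauchy product.
-/

open PowerSeries Finset Filter Topology
open scoped Nat

section FormalPowerSeries

variable {K : Type*} [Field K]

noncomputable def hypergeometric1F1Coeff (a b : K) (n : ℕ) : K :=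
  (ascPochhammer K n).eval a / ((ascPochhammer K n).eval b * n !)

noncomputable def hypergeometric1F1Series (a b : K) : K⟦X⟧ :=
  mk (hypergeometric1F1Coeff a b)

-- No hypothesis on `b`: when `(b)_{n+1} = 0` both sides are `0` because `x / 0 = 0`.
theorem hypergeometric1F1Coeff_succ (a b : K) (n : ℕ) :
    hypergeometric1F1Coeff a b (n + 1) =
      (a + n) / ((n + 1) * (b + n)) * hypergeometric1F1Coeff a b n := by
  simp only [hypergeometric1F1Coeff, ascPochhammer_succ_eval, Nat.factorial_succ, Nat.cast_mul,
    Nat.cast_succ, div_mul_div_comm]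
  ring

theorem hypergeometric1F1Coeff_succ_mul [CharZero K] (a : K) {b : K} {n : ℕ} (hb : b + n ≠ 0) :
    (n + 1) * (b + n) * hypergeometric1F1Coeff a b (n + 1) =
      (a + n) * hypergeometric1F1Coeff a b n := by
  have hn : (n + 1 : K) ≠ 0 := Nat.cast_add_one_ne_zero n
  rw [hypergeometric1F1Coeff_succ]
  field_simp

theorem hypergeometric1F1Series_ode [CharZero K] {a b : K} (hb : ∀ n : ℕ, b + n ≠ 0) :
    X * d⁄dX K (d⁄dX K (hypergeometric1F1Series a b)) +
      (C b - X) * d⁄dX K (hypergeometric1F1Series a b) = C a * hypergeometric1F1Series a b := by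
  ext n
  simp only [hypergeometric1F1Series, map_add, sub_mul, map_sub, coeff_C_mul]
  rcases n with _ | n
  · simp only [coeff_zero_X_mul, coeff_derivative, coeff_mk]
    have h := hypergeometric1F1Coeff_succ_mul a (n := 0) (by simpa using hb 0)
    norm_num at h
    linear_combination h
  · simp only [coeff_succ_X_mul, coeff_derivative, coeff_mk]
    have h := hypergeometric1F1Coeff_succ_mul a (hb (n + 1))
    push_cast at h ⊢
    linear_combination h

theorem derivative_rescale {R : Type*} [CommSemiring R] (t : R) (f : R⟦X⟧) :
    d⁄dX R (rescale t f) = C t * rescale t (d⁄dX R f) := by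
  ext n
  simp only [coeff_derivative, coeff_rescale, coeff_C_mul, pow_succ]
  ring

noncomputable def kummerProduct [CharZero K] (a : K) : K⟦X⟧ :=
  rescale (-(1 / 2)) (exp K) * hypergeometric1F1Series a (2 * a)

theorem kummerProduct_ode [CharZero K] {a : K} (ha : ∀ n : ℕ, 2 * a + n ≠ 0) :
    X * d⁄dX K (d⁄dX K (kummerProduct a)) + C (2 * a) * d⁄dX K (kummerProduct a) =
      C (1 / 4) * (X * kummerProduct a) := by
  set t : K⟦X⟧ := C (-(1 / 2))
  set E := rescale (-(1 / 2)) (exp K)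
  set M := hypergeometric1F1Series a (2 * a)
  have hE : d⁄dX K E = t * E := by rw [derivative_rescale, derivative_exp]
  have hF' : d⁄dX K (E * M) = t * (E * M) + E * d⁄dX K M := by
    rw [Derivation.leibniz, hE, smul_eq_mul, smul_eq_mul]; ring
  have hF'' : d⁄dX K (d⁄dX K (E * M)) =
      t ^ 2 * (E * M) + 2 * t * E * d⁄dX K M + E * d⁄dX K (d⁄dX K M) := by
    have ht : d⁄dX K t = 0 := derivative_C
    simp only [hF', map_add, Derivation.leibniz, hE, ht, smul_eq_mul]
    ring
  have h2t : 2 * t + 1 = 0 := by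
    rw [← map_ofNat C 2, ← map_mul, ← map_one C, ← map_add]; norm_num
  have h14 : C (1 / 4 : K) = t ^ 2 := by rw [← map_pow]; norm_num
  have h2a : C (2 * a) = 2 * C a := by rw [map_mul, map_ofNat]
  rw [kummerProduct, hF'', hF']
  linear_combination E * hypergeometric1F1Series_ode (a := a) ha - X * (E * M) * h14 +
    (X * E * d⁄dX K M + C a * (E * M)) * h2t + t * (E * M) * h2a

theorem coeff_one_kummerProduct [CharZero K] {a : K} (ha : ∀ n : ℕ, 2 * a + n ≠ 0) :
    coeff 1 (kummerProduct a) = 0 := by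
  have h := congrArg (coeff 0) (kummerProduct_ode ha)
  simp only [map_add, coeff_C_mul, coeff_zero_X_mul, coeff_derivative, mul_zero, zero_add] at h
  simpa [(by simpa using ha 0 : a ≠ 0)] using h

theorem coeff_kummerProduct_add_two [CharZero K] {a : K} (ha : ∀ n : ℕ, 2 * a + n ≠ 0) (n : ℕ) :
    coeff (n + 2) (kummerProduct a) =
      1 / 4 / ((n + 2) * (2 * a + n + 1)) * coeff n (kummerProduct a) := by
  have h := congrArg (coeff (n + 1)) (kummerProduct_ode ha)
  simp only [map_add, coeff_C_mul, coeff_succ_X_mul, coeff_derivative] at h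
  have h1 : (n + 2 : K) ≠ 0 := by exact_mod_cast Nat.succ_ne_zero (n + 1)
  have h2 : 2 * a + n + 1 ≠ 0 := by simpa [add_assoc] using ha (n + 1)
  rw [div_mul_eq_mul_div, eq_div_iff (mul_ne_zero h1 h2)]
  push_cast at h
  linear_combination h

theorem coeff_kummerProduct [CharZero K] {a : K} (ha : ∀ n : ℕ, 2 * a + n ≠ 0) (j : ℕ) :
    coeff (2 * j) (kummerProduct a) =
        (1 / 16) ^ j / ((ascPochhammer K j).eval (a + 1 / 2) * j !) ∧
      coeff (2 * j + 1) (kummerProduct a) = 0 := by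
  induction j with
  | zero =>
    refine ⟨?_, coeff_one_kummerProduct ha⟩
    rw [Nat.mul_zero, kummerProduct, coeff_mul, Nat.antidiagonal_zero, sum_singleton]
    simp [coeff_exp, hypergeometric1F1Series, hypergeometric1F1Coeff]
  | succ j ih =>
    have hc (k : ℕ) : a + 1 / 2 + k ≠ 0 := fun h =>
      ha (2 * k + 1) (by push_cast; linear_combination 2 * h)
    have hp : (ascPochhammer K j).eval (a + 1 / 2) ≠ 0 := by
      rw [Ne, ascPochhammer_eval_eq_zero_iff]
      rintro ⟨k, -, hk⟩
      exact hc k (by rw [hk]; ring)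
    have hcj := hc j
    have hj : (j + 1 : K) ≠ 0 := Nat.cast_add_one_ne_zero j
    refine ⟨?_, ?_⟩
    · rw [show 2 * (j + 1) = 2 * j + 2 by ring, coeff_kummerProduct_add_two ha, ih.1,
        ascPochhammer_succ_eval, Nat.factorial_succ]
      push_cast
      field_simp
      ring
    · rw [show 2 * (j + 1) + 1 = 2 * j + 1 + 2 by ring, coeff_kummerProduct_add_two ha, ih.2,
        mul_zero]

theorem coeff_rescale_exp_mul_pow [CharZero K] (t w : K) (n : ℕ) :
    coeff n (rescale t (exp K)) * w ^ n = (t * w) ^ n / n ! := by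
  rw [coeff_rescale, coeff_exp, mul_pow, map_div₀, map_one, map_natCast]
  ring

end FormalPowerSeries

theorem summable_norm_of_succ_eq_mul {𝕜 : Type*} [NormedField 𝕜] {f r : ℕ → 𝕜}
    (hf : ∀ n, f (n + 1) = r n * f n) (hr : Tendsto r atTop (𝓝 0)) :
    Summable fun n => ‖f n‖ := by
  refine summable_of_ratio_norm_eventually_le one_half_lt_one ?_
  filter_upwards [hr.norm.eventually (ge_mem_nhds (by norm_num : ‖(0 : 𝕜)‖ < 1 / 2))] with n hn
  rw [norm_norm, norm_norm, hf, norm_mul]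
  exact mul_le_mul_of_nonneg_right hn (norm_nonneg _)

theorem tsum_coeff_mul_mul_pow {R : Type*} [NormedCommRing R] [CompleteSpace R] {f g : R⟦X⟧}
    {w : R} (hf : Summable fun n => ‖coeff n f * w ^ n‖)
    (hg : Summable fun n => ‖coeff n g * w ^ n‖) :
    ∑' n, coeff n (f * g) * w ^ n = (∑' n, coeff n f * w ^ n) * ∑' n, coeff n g * w ^ n := by
  rw [tsum_mul_tsum_eq_tsum_sum_antidiagonal_of_summable_norm hf hg]
  refine tsum_congr fun n => ?_
  rw [coeff_mul, sum_mul]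
  refine sum_congr rfl fun p hp => ?_
  rw [← mem_antidiagonal.mp hp, pow_add]
  ring

theorem tsum_eq_tsum_two_mul_of_odd_eq_zero {α : Type*} [AddCommMonoid α] [TopologicalSpace α]
    {f : ℕ → α} (hf : ∀ j, f (2 * j + 1) = 0) : ∑' n, f n = ∑' j, f (2 * j) := by
  refine ((mul_right_injective₀ two_ne_zero).tsum_eq fun n hn => ?_).symm
  obtain ⟨j, rfl | rfl⟩ := Nat.even_or_odd' n
  · exact ⟨j, rfl⟩
  · exact absurd (hf j) hn

theorem summable_norm_coeff_hypergeometric1F1Series_mul_pow (a b w : ℂ) :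
    Summable fun n => ‖coeff n (hypergeometric1F1Series a b) * w ^ n‖ := by
  simp only [hypergeometric1F1Series, coeff_mk]
  refine summable_norm_of_succ_eq_mul (r := fun n => (a + n) / ((n + 1) * (b + n)) * w)
    (fun n => by rw [hypergeometric1F1Coeff_succ, pow_succ]; ring) ?_
  have h := (tendsto_add_mul_div_add_mul_atTop_nhds a b 1 one_ne_zero).mul
    ((tendsto_one_div_add_atTop_nhds_zero_nat (𝕜 := ℂ)).mul_const w)
  rw [zero_mul, mul_zero] at h
  refine h.congr fun n => ?_
  simp only [one_mul]
  rw [← mul_assoc, div_mul_div_comm, mul_one, mul_comm (b + n)]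

theorem summable_norm_coeff_rescale_exp_mul_pow (t w : ℂ) :
    Summable fun n => ‖coeff n (rescale t (exp ℂ)) * w ^ n‖ := by
  simpa only [coeff_rescale_exp_mul_pow] using NormedSpace.norm_expSeries_div_summable (t * w)

theorem tsum_coeff_rescale_exp_mul_pow (t w : ℂ) :
    ∑' n, coeff n (rescale t (exp ℂ)) * w ^ n = Complex.exp (t * w) := by
  simpa only [coeff_rescale_exp_mul_pow, Complex.exp_eq_exp_ℂ]
    using (NormedSpace.expSeries_div_hasSum_exp (t * w)).tsum_eq

theorem kummer_second_transformation_general (c : ℂ)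
    (hc2 : ∀ n : ℕ, 2 * c - 1 ≠ -(n : ℂ)) :
    ∀ w : ℂ,
      (∑' j : ℕ, (w ^ 2 / 16) ^ j /
          ((ascPochhammer ℂ j).eval c * (j.factorial : ℂ)))
        = Complex.exp (-w / 2) *
            ∑' n : ℕ, (ascPochhammer ℂ n).eval (c - 1 / 2) * w ^ n /
              ((ascPochhammer ℂ n).eval (2 * c - 1) * (n.factorial : ℂ)) := by
  intro w
  obtain ⟨a, rfl⟩ : ∃ a, c = a + 1 / 2 := ⟨c - 1 / 2, by ring⟩
  have ha (n : ℕ) : 2 * a + n ≠ 0 := fun h => hc2 n (by linear_combination h)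
  rw [add_sub_cancel_right, show 2 * (a + 1 / 2) - 1 = 2 * a by ring]
  calc ∑' j : ℕ, (w ^ 2 / 16) ^ j / ((ascPochhammer ℂ j).eval (a + 1 / 2) * j !)
      = ∑' j : ℕ, coeff (2 * j) (kummerProduct a) * w ^ (2 * j) := by
        refine tsum_congr fun j => ?_
        rw [(coeff_kummerProduct ha j).1, pow_mul]
        ring
    _ = ∑' n : ℕ, coeff n (kummerProduct a) * w ^ n :=
        (tsum_eq_tsum_two_mul_of_odd_eq_zero (f := fun n => coeff n (kummerProduct a) * w ^ n)
          fun j => by rw [(coeff_kummerProduct ha j).2, zero_mul]).symm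
    _ = Complex.exp (-(1 / 2) * w) * ∑' n : ℕ, hypergeometric1F1Coeff a (2 * a) n * w ^ n := by
        rw [kummerProduct, tsum_coeff_mul_mul_pow (summable_norm_coeff_rescale_exp_mul_pow _ w)
          (summable_norm_coeff_hypergeometric1F1Series_mul_pow a (2 * a) w),
          tsum_coeff_rescale_exp_mul_pow]
        simp only [hypergeometric1F1Series, coeff_mk]
    _ = _ := by
        rw [show -(1 / 2) * w = -w / 2 by ring]
        simp only [hypergeometric1F1Coeff, div_mul_eq_mul_div]

/-- Kummer's second transformation:
`F(c; w²/16) = e^(-w/2) F(c-1/2; 2c-1; w)` whenever `c` and `2c-1` are not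
nonpositive integers. -/
theorem kummer_second_transformation (c : ℂ)
    (hc : ∀ n : ℕ, c ≠ -(n : ℂ)) (hc2 : ∀ n : ℕ, 2 * c - 1 ≠ -(n : ℂ)) :
    ∀ w : ℂ,
      (∑' j : ℕ, (w ^ 2 / 16) ^ j /
          ((ascPochhammer ℂ j).eval c * (j.factorial : ℂ)))
        = Complex.exp (-w / 2) *
            ∑' n : ℕ, (ascPochhammer ℂ n).eval (c - 1 / 2) * w ^ n /
              ((ascPochhammer ℂ n).eval (2 * c - 1) * (n.factorial : ℂ)) :=
  kummer_second_transformation_general c hc2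
end

section
/- Degenerate case of the confluent equation: let a ∈ ℂ, let m ∈ ℕ, and let z ∈ ℂ with z ≠ 0. Then (a−m)_m · 𝐅(a;1+m;z) = z^{−m} · 𝐅(a−m;1−m;z), where 𝐅 is the regularized confluent hypergeometric function. -/
open Complex

/-- The regularized confluent hypergeometric function
`𝐅(a;c;z) = ∑ (a)ₙ zⁿ / (Γ(c+n) n!)`, where `1/Γ` is the entire reciprocal
Gamma function (Mathlib's `Complex.Gamma` vanishes at the poles, so
`(Complex.Gamma _)⁻¹` is the entire reciprocal). -/
noncomputable def regConfluent (a c z : ℂ) : ℂ :=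
  ∑' n : ℕ, (ascPochhammer ℂ n).eval a * z ^ n *
    (Complex.Gamma (c + n))⁻¹ / (n.factorial : ℂ)

/-- degenerate case of the confluent equation:
`(a-m)ₘ 𝐅(a;1+m;z) = z^(-m) 𝐅(a-m;1-m;z)` for `z ≠ 0`. -/
theorem confluent_degenerate (a : ℂ) (m : ℕ) (z : ℂ) (hz0 : z ≠ 0) :
    (ascPochhammer ℂ m).eval (a - m) * regConfluent a (1 + m) z
      = z ^ (-(m : ℤ)) * regConfluent (a - m) (1 - m) z := by
  unfold regConfluent
  rw [← tsum_mul_left, ← tsum_mul_left]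
  set f : ℕ → ℂ := fun n => z ^ (-(m : ℤ)) *
    ((ascPochhammer ℂ n).eval (a - m) * z ^ n *
      (Complex.Gamma (1 - m + n))⁻¹ / (n.factorial : ℂ)) with hf
  have hinj : Function.Injective (fun k : ℕ => m + k) := fun x y h => by
    simpa using h
  have hzero : Function.support f ⊆ Set.range (fun k : ℕ => m + k) := by
    intro n hn
    simp only [Set.mem_range]
    by_contra h
    push_neg at h
    have hnm : n < m := by
      by_contra h'
      exact (h (n - m)) (by omega)
    apply hn
    have hΓ : (1 : ℂ) - m + n = -((m - 1 - n : ℕ) : ℂ) := by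
      have h1 : ((m - 1 - n : ℕ) : ℂ) = (m : ℂ) - 1 - n := by
        have : (m - 1 - n : ℕ) + n + 1 = m := by omega
        have := congrArg (fun t : ℕ => (t : ℂ)) this
        push_cast at this
        linear_combination this
      rw [h1]; ring
    simp [hf, hΓ, Complex.Gamma_neg_nat_eq_zero]
  rw [← hinj.tsum_eq hzero]
  refine tsum_congr fun k => ?_
  simp only [hf]
  -- Pochhammer splitting
  have hpoch : (ascPochhammer ℂ (m + k)).eval (a - m)
      = (ascPochhammer ℂ m).eval (a - m) * (ascPochhammer ℂ k).eval a := by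
    rw [← ascPochhammer_mul, Polynomial.eval_mul, Polynomial.eval_comp]
    simp
  -- Gamma values
  have hΓ1 : Complex.Gamma (1 + (m : ℂ) + k) = ((m + k).factorial : ℂ) := by
    rw [show (1 : ℂ) + m + k = ((m + k : ℕ) : ℂ) + 1 by push_cast; ring,
      Complex.Gamma_nat_eq_factorial]
  have hΓ2 : Complex.Gamma (1 - (m : ℂ) + (m + k : ℕ)) = (k.factorial : ℂ) := by
    rw [show (1 : ℂ) - m + (m + k : ℕ) = ((k : ℂ)) + 1 by push_cast; ring,
      Complex.Gamma_nat_eq_factorial]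
  rw [hΓ1, hΓ2, hpoch, zpow_neg, zpow_natCast]
  have hf1 : ((m + k).factorial : ℂ) ≠ 0 := Nat.cast_ne_zero.2 (Nat.factorial_ne_zero _)
  have hf2 : ((k).factorial : ℂ) ≠ 0 := Nat.cast_ne_zero.2 (Nat.factorial_ne_zero _)
  field_simp
  ring
end
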